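/- arXiv:2601.04747 — 7 statements merged into one kernel-verified Lean document; each statement's English description precedes it below -/
import Mathlib

section
/- Let V be a pseudovariety of semigroups such that at least one of the following holds: every finite semigroup satisfying x·x = x and x·y·x = x·y for all x, y belongs to V; every finite semigroup satisfying x·x = x and x·y·x = y·x for all x, y belongs to V; or every finite semigroup possessing a zero element z (i.e. z·s = s·z = z for all s) and satisfying x·x = z and x·y·x = z for all x, y belongs to V. Then there exists a constant ε > 0 such that for every N ≥ 1 there exist a semigroup S ∈ V with |S| ≤ N, a subset Σ ⊆ S with |Σ| ≥ ε·√N, and an element t in the subsemigroup generated by Σ such that t does not belong to the subsemigroup generated by any proper subset of Σ; in particular, every straight-line sequence over Σ computing t has length at least ε·√N. -/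
/-- A straight-line sequence over `Sig` in a semigroup: every entry is either a
generator from `Sig` or a product of two earlier entries. -/
def IsSLSeq {S : Type*} [Semigroup S] (Sig : Set S) (L : List S) : Prop :=
  ∀ m : Fin L.length, L.get m ∈ Sig ∨
    ∃ i j : Fin L.length, (i : ℕ) < (m : ℕ) ∧ (j : ℕ) < (m : ℕ) ∧ L.get m = L.get i * L.get j

/-- The straight-line cost of `t` over `Sig`: the minimal length of a straight-line
sequence over `Sig` containing `t`. -/
noncomputable def slCost {S : Type*} [Semigroup S] (Sig : Set S) (t : S) : ℕ :=
  sInf { n : ℕ | ∃ L : List S, IsSLSeq Sig L ∧ t ∈ L ∧ L.length = n }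

/-- A pseudovariety of (finite) semigroups: a class of finite semigroups closed under
isomorphism and subsemigroups (via injective homomorphisms), homomorphic images
(via surjective homomorphisms), and finite direct products. -/
structure Pseudovariety : Type 1 where
  mem : ∀ (S : Type) [Semigroup S] [Fintype S], Prop
  closed_sub : ∀ (S T : Type) [Semigroup S] [Fintype S] [Semigroup T] [Fintype T]
    (f : S →ₙ* T), Function.Injective f → mem T → mem S
  closed_hom : ∀ (S T : Type) [Semigroup S] [Fintype S] [Semigroup T] [Fintype T]
    (f : S →ₙ* T), Function.Surjective f → mem S → mem T
  closed_prod : ∀ (S T : Type) [Semigroup S] [Fintype S] [Semigroup T] [Fintype T],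
    mem S → mem T → mem (S × T)

/-- A left-regular band: `x·x = x` and `x·y·x = x·y`. -/
def IsLRB (S : Type*) [Semigroup S] : Prop :=
  (∀ x : S, x * x = x) ∧ ∀ x y : S, x * y * x = x * y

/-- A right-regular band: `x·x = x` and `x·y·x = y·x`. -/
def IsRRB (S : Type*) [Semigroup S] : Prop :=
  (∀ x : S, x * x = x) ∧ ∀ x y : S, x * y * x = y * x

/-- A semigroup with a zero element `z` such that `x·x = z` and `x·y·x = z`. -/
def IsTNil (S : Type*) [Semigroup S] : Prop :=
  ∃ z : S, (∀ s : S, z * s = z ∧ s * z = z) ∧ (∀ x : S, x * x = z) ∧ ∀ x y : S, x * y * x = z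

/-- Auxiliary witness for STATEMENT 2. -/
def ObstructionWitness (V : Pseudovariety) (ε : ℝ) (N : ℕ)
    (S : Type) [Semigroup S] [Fintype S] : Prop :=
  V.mem S ∧ Fintype.card S ≤ N ∧
    ∃ (Sig : Set S) (t : S),
      ε * Real.sqrt N ≤ (Sig.ncard : ℝ) ∧
      t ∈ Subsemigroup.closure Sig ∧
      (∀ Sig' : Set S, Sig' ⊂ Sig → t ∉ Subsemigroup.closure Sig') ∧
      (∀ L : List S, IsSLSeq Sig L → t ∈ L → ε * Real.sqrt N ≤ (L.length : ℝ))

namespace Obstr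

/-- General lemma: if `t` needs all of `Sig`, any SL sequence containing `t` has length
at least `Sig.ncard`. -/
theorem sl_length_ge {S : Type*} [Semigroup S] (Sig : Set S) (t : S)
    (ht : ∀ Sig' : Set S, Sig' ⊂ Sig → t ∉ Subsemigroup.closure Sig')
    (L : List S) (hL : IsSLSeq Sig L) (htL : t ∈ L) :
    Sig.ncard ≤ L.length := by
  classical
  set Sig'' : Set S := Sig ∩ {x | x ∈ L} with hSig''
  have key : ∀ n (m : Fin L.length), (m : ℕ) = n → L.get m ∈ Subsemigroup.closure Sig'' := by
    intro n
    induction n using Nat.strong_induction_on with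
    | _ n ih =>
      intro m hm
      rcases hL m with hg | ⟨i, j, hi, hj, he⟩
      · exact Subsemigroup.subset_closure ⟨hg, List.get_mem _ _⟩
      · rw [he]
        exact mul_mem (ih i (hm ▸ hi) i rfl) (ih j (hm ▸ hj) j rfl)
  obtain ⟨m, hm⟩ := List.mem_iff_get.mp htL
  have htc : t ∈ Subsemigroup.closure Sig'' := hm ▸ key m m rfl
  have hsub : Sig ⊆ {x | x ∈ L} := by
    by_contra hns
    refine ht Sig'' ⟨Set.inter_subset_left, fun hx => hns ?_⟩ htc
    exact fun x hx' => (hx hx').2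
  calc Sig.ncard ≤ L.toFinset.card := by
        have h1 : Sig ⊆ ↑L.toFinset := by intro x hx; simpa using hsub hx
        have h2 := Set.ncard_le_ncard h1 L.toFinset.finite_toSet
        rwa [Set.ncard_coe_finset] at h2
    _ ≤ L.length := L.toFinset_card_le

lemma quarter_sqrt_le {n m : ℕ} (h : n ≤ 16 * m * m) : (1/4 : ℝ) * Real.sqrt n ≤ m := by
  have h1 : Real.sqrt n ≤ Real.sqrt (16 * m * m : ℕ) := Real.sqrt_le_sqrt (by exact_mod_cast h)
  have h2 : Real.sqrt ((16 * m * m : ℕ) : ℝ) = 4 * m := by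
    rw [show ((16 * m * m : ℕ) : ℝ) = (4 * m) ^ 2 by push_cast; ring,
      Real.sqrt_sq (by positivity)]
  rw [h2] at h1
  nlinarith [Real.sqrt_nonneg (n : ℝ)]

/-! ### The left-regular band of runs -/

def Run (k : ℕ) : Type := {p : Fin k × Fin k // (p.1 : ℕ) ≤ (p.2 : ℕ)}

namespace Run

variable {k : ℕ}

instance : DecidableEq (Run k) :=
  inferInstanceAs (DecidableEq {p : Fin k × Fin k // (p.1 : ℕ) ≤ (p.2 : ℕ)})

instance : Fintype (Run k) :=
  inferInstanceAs (Fintype {p : Fin k × Fin k // (p.1 : ℕ) ≤ (p.2 : ℕ)})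

def lo (x : Run k) : ℕ := x.1.1
def hi (x : Run k) : ℕ := x.1.2

lemma lo_le_hi (x : Run k) : x.lo ≤ x.hi := x.2
lemma hi_lt (x : Run k) : x.hi < k := x.1.2.2

lemma ext' {a b : Run k} (h1 : a.lo = b.lo) (h2 : a.hi = b.hi) : a = b :=
  Subtype.ext (Prod.ext (Fin.ext h1) (Fin.ext h2))

lemma val_max (a b : Fin k) : ((max a b : Fin k) : ℕ) = max (a : ℕ) (b : ℕ) := by
  rcases le_total a b with h | h
  · rw [max_eq_right h, max_eq_right (by exact_mod_cast h)]
  · rw [max_eq_left h, max_eq_left (by exact_mod_cast h)]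

instance : Mul (Run k) :=
  ⟨fun a b => if (b.1.1 : ℕ) ≤ (a.1.2 : ℕ) + 1 then
      ⟨(a.1.1, max a.1.2 b.1.2), le_trans a.2 (by rw [val_max]; exact le_max_left _ _)⟩
    else b⟩

lemma mul_def (a b : Run k) : a * b =
    if b.lo ≤ a.hi + 1 then
      ⟨(a.1.1, max a.1.2 b.1.2), le_trans a.2 (by rw [val_max]; exact le_max_left _ _)⟩
    else b := rfl

lemma lo_mul (a b : Run k) : (a * b).lo = if b.lo ≤ a.hi + 1 then a.lo else b.lo := by
  rw [mul_def]
  by_cases h : b.lo ≤ a.hi + 1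
  · exact (congrArg lo (if_pos h)).trans (if_pos h).symm
  · exact (congrArg lo (if_neg h)).trans (if_neg h).symm

lemma hi_mul (a b : Run k) : (a * b).hi = if b.lo ≤ a.hi + 1 then max a.hi b.hi else b.hi := by
  rw [mul_def]
  by_cases h : b.lo ≤ a.hi + 1
  · exact (congrArg hi (if_pos h)).trans ((val_max _ _).trans (if_pos h).symm)
  · exact (congrArg hi (if_neg h)).trans (if_neg h).symm

instance : Semigroup (Run k) where
  mul_assoc a b c := by
    have ha := a.lo_le_hi; have hb := b.lo_le_hi; have hc := c.lo_le_hi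
    apply ext' <;> simp only [lo_mul, hi_mul] <;> split_ifs <;> omega

lemma isLRB : IsLRB (Run k) := by
  constructor
  · intro x
    apply ext' <;> simp only [lo_mul, hi_mul] <;> split_ifs <;> omega
  · intro x y
    have hx := x.lo_le_hi; have hy := y.lo_le_hi
    apply ext' <;> simp only [lo_mul, hi_mul] <;> split_ifs <;> omega

def dg (a : Fin k) : Run k := ⟨(a, a), le_refl _⟩

lemma dg_inj : Function.Injective (dg : Fin k → Run k) := by
  intro a b hab
  exact Fin.ext (congrArg lo hab)

@[simp] lemma lo_dg (a : Fin k) : (dg a).lo = a := rfl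
@[simp] lemma hi_dg (a : Fin k) : (dg a).hi = a := rfl

def mk0 (j : ℕ) (hj : j < k) : Run k :=
  ⟨(⟨0, Nat.lt_of_le_of_lt (Nat.zero_le _) hj⟩, ⟨j, hj⟩), Nat.zero_le _⟩

@[simp] lemma lo_mk0 (j : ℕ) (hj : j < k) : (mk0 j hj).lo = 0 := rfl
@[simp] lemma hi_mk0 (j : ℕ) (hj : j < k) : (mk0 j hj).hi = j := rfl

lemma mk0_succ (j : ℕ) (hj : j + 1 < k) :
    mk0 (j+1) hj = mk0 j (Nat.lt_of_succ_lt hj) * dg ⟨j+1, hj⟩ := by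
  apply ext' <;> simp only [lo_mul, hi_mul, lo_mk0, hi_mk0, lo_dg, hi_dg] <;>
    simp

lemma mk0_mem : ∀ (j : ℕ) (hj : j < k),
    mk0 j hj ∈ Subsemigroup.closure (Set.range (dg : Fin k → Run k)) := by
  intro j
  induction j with
  | zero => intro hj; exact Subsemigroup.subset_closure ⟨⟨0, hj⟩, rfl⟩
  | succ j ih =>
    intro hj
    rw [mk0_succ j hj]
    exact mul_mem (ih _) (Subsemigroup.subset_closure ⟨⟨j+1, hj⟩, rfl⟩)



/-- The subsemigroup of runs avoiding level `a`. -/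
def avoidSub (a : ℕ) : Subsemigroup (Run k) where
  carrier := {x | x.hi < a ∨ a < x.lo}
  mul_mem' := by
    intro x y hx hy
    have hx' := x.lo_le_hi; have hy' := y.lo_le_hi
    simp only [Set.mem_setOf_eq, lo_mul, hi_mul] at *
    split_ifs <;> omega

lemma mem_avoidSub {a : ℕ} {x : Run k} : x ∈ avoidSub a ↔ (x.hi < a ∨ a < x.lo) := Iff.rfl

end Run

/-! ### The nilpotent semigroup of runs with zero -/

abbrev TRun (k : ℕ) : Type := Option (Run k)

namespace TRun

variable {k : ℕ}

def glue (x y : Run k) (h : y.lo = x.hi + 1) : Run k :=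
  ⟨(x.1.1, y.1.2), le_trans x.2 (by
    have := x.lo_le_hi; have := y.lo_le_hi
    show (x.1.2 : ℕ) ≤ (y.1.2 : ℕ)
    have hx : (x.1.2 : ℕ) = x.hi := rfl
    have hy : (y.1.2 : ℕ) = y.hi := rfl
    omega)⟩

@[simp] lemma lo_glue (x y : Run k) (h) : (glue x y h).lo = x.lo := rfl
@[simp] lemma hi_glue (x y : Run k) (h) : (glue x y h).hi = y.hi := rfl

instance : Mul (TRun k) :=
  ⟨fun a b => match a, b with
    | some x, some y => if h : y.lo = x.hi + 1 then some (glue x y h) else none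
    | _, _ => none⟩

lemma none_mul (a : TRun k) : (none : TRun k) * a = none := by cases a <;> rfl
lemma mul_none (a : TRun k) : a * (none : TRun k) = none := by cases a <;> rfl
lemma some_mul_some (x y : Run k) :
    (some x : TRun k) * some y = if h : y.lo = x.hi + 1 then some (glue x y h) else none := rfl

instance : Semigroup (TRun k) where
  mul_assoc a b c := by
    rcases a with _ | x
    · rw [none_mul, none_mul, none_mul]
    rcases b with _ | y
    · rw [mul_none, none_mul, mul_none]
    rcases c with _ | z
    · rw [mul_none, mul_none, mul_none]
    by_cases h1 : y.lo = x.hi + 1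
    · rw [some_mul_some x y, dif_pos h1]
      by_cases h2 : z.lo = y.hi + 1
      · rw [some_mul_some y z, dif_pos h2, some_mul_some (glue x y h1) z,
          dif_pos (show z.lo = (glue x y h1).hi + 1 by simpa using h2),
          some_mul_some x (glue y z h2),
          dif_pos (show (glue y z h2).lo = x.hi + 1 by simpa using h1)]
        simp only [Option.some.injEq]
        apply Run.ext' <;> simp
      · rw [some_mul_some y z, dif_neg h2, some_mul_some (glue x y h1) z,
          dif_neg (show ¬z.lo = (glue x y h1).hi + 1 by simpa using h2), mul_none]
    · rw [some_mul_some x y, dif_neg h1, none_mul]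
      by_cases h2 : z.lo = y.hi + 1
      · rw [some_mul_some y z, dif_pos h2, some_mul_some x (glue y z h2),
          dif_neg (show ¬(glue y z h2).lo = x.hi + 1 by simpa using h1)]
      · rw [some_mul_some y z, dif_neg h2, mul_none]

lemma isTNil : IsTNil (TRun k) := by
  refine ⟨none, fun s => ⟨none_mul s, mul_none s⟩, ?_, ?_⟩
  · intro x
    rcases x with _ | x
    · exact none_mul none
    · rw [some_mul_some, dif_neg (by have := x.lo_le_hi; omega)]
  · intro x y
    rcases x with _ | x
    · rw [none_mul, none_mul]
    rcases y with _ | y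
    · rw [mul_none, none_mul]
    rw [some_mul_some]
    split_ifs with h1
    · rw [some_mul_some, dif_neg]
      have := x.lo_le_hi; have := y.lo_le_hi
      simp only [hi_glue]
      omega
    · rw [none_mul]

def dg (a : Fin k) : TRun k := some (Run.dg a)

lemma dg_inj : Function.Injective (dg : Fin k → TRun k) := by
  intro a b hab
  exact Run.dg_inj (Option.some_injective _ hab)

lemma mk0_mem : ∀ (j : ℕ) (hj : j < k),
    (some (Run.mk0 j hj) : TRun k) ∈ Subsemigroup.closure (Set.range (dg : Fin k → TRun k)) := by
  intro j
  induction j with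
  | zero => intro hj; exact Subsemigroup.subset_closure ⟨⟨0, hj⟩, rfl⟩
  | succ j ih =>
    intro hj
    have hj' : j < k := Nat.lt_of_succ_lt hj
    have hstep : (some (Run.mk0 (j+1) hj) : TRun k) = some (Run.mk0 j hj') * dg ⟨j+1, hj⟩ := by
      show _ = some (Run.mk0 j hj') * some (Run.dg ⟨j+1, hj⟩)
      rw [some_mul_some, dif_pos (by simp)]
      simp only [Option.some.injEq]
      apply Run.ext' <;> rfl
    rw [hstep]
    exact mul_mem (ih hj') (Subsemigroup.subset_closure ⟨⟨j+1, hj⟩, rfl⟩)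

/-- The subsemigroup of `TRun` avoiding level `a`. -/
def avoidSub (a : ℕ) : Subsemigroup (TRun k) where
  carrier := {x | ∀ r : Run k, x = some r → (r.hi < a ∨ a < r.lo)}
  mul_mem' := by
    intro x y hx hy
    rcases x with _ | x
    · intro r hr; rw [none_mul] at hr; exact absurd hr (by simp)
    rcases y with _ | y
    · intro r hr; rw [mul_none] at hr; exact absurd hr (by simp)
    intro r hr
    by_cases h1 : y.lo = x.hi + 1
    · rw [some_mul_some, dif_pos h1] at hr
      have hx' := hx x rfl
      have hy' := hy y rfl
      have := x.lo_le_hi; have := y.lo_le_hi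
      cases hr
      simp only [lo_glue, hi_glue]
      omega
    · rw [some_mul_some, dif_neg h1] at hr
      exact absurd hr (by simp)

end TRun

end Obstr


namespace Obstr

namespace TRun

variable {k : ℕ}

lemma mem_avoidSub {a : ℕ} {x : TRun k} :
    x ∈ avoidSub a ↔ ∀ r : Run k, x = some r → (r.hi < a ∨ a < r.lo) := Iff.rfl

end TRun

/-! ### The right-regular band: opposite of `Run k` -/

namespace ORun

open MulOpposite

variable {k : ℕ}

instance : Fintype (Run k)ᵐᵒᵖ := Fintype.ofEquiv (Run k) MulOpposite.opEquiv

lemma isRRB : IsRRB (Run k)ᵐᵒᵖ := by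
  obtain ⟨hid, hlrb⟩ := (Run.isLRB (k := k))
  constructor
  · intro x
    apply unop_injective
    rw [unop_mul]
    exact hid _
  · intro x y
    apply unop_injective
    simp only [unop_mul]
    rw [← mul_assoc]
    exact hlrb _ _

def avoidSubOp (a : ℕ) : Subsemigroup (Run k)ᵐᵒᵖ where
  carrier := {x | (unop x).hi < a ∨ a < (unop x).lo}
  mul_mem' := by
    intro x y hx hy
    show ((unop (x * y)).hi < a ∨ a < (unop (x * y)).lo)
    rw [unop_mul]
    exact (Run.avoidSub a).mul_mem hy hx

lemma mem_avoidSubOp {a : ℕ} {x : (Run k)ᵐᵒᵖ} :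
    x ∈ avoidSubOp a ↔ ((unop x).hi < a ∨ a < (unop x).lo) := Iff.rfl

lemma op_mk0_mem : ∀ (j : ℕ) (hj : j < k),
    op (Run.mk0 j hj) ∈ Subsemigroup.closure (Set.range fun a : Fin k => op (Run.dg a)) := by
  intro j
  induction j with
  | zero => intro hj; exact Subsemigroup.subset_closure ⟨⟨0, hj⟩, rfl⟩
  | succ j ih =>
    intro hj
    rw [Run.mk0_succ j hj, op_mul]
    exact mul_mem (Subsemigroup.subset_closure ⟨⟨j+1, hj⟩, rfl⟩) (ih _)

end ORun

/-! ### Counting and packaging -/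

lemma card_run_le (k : ℕ) : Fintype.card (Run k) ≤ k * k := by
  calc Fintype.card (Run k) ≤ Fintype.card (Fin k × Fin k) := Fintype.card_subtype_le _
    _ = k * k := by simp

lemma ncard_range {α β : Type*} [Fintype α] (f : α → β) (hf : Function.Injective f) :
    (Set.range f).ncard = Fintype.card α := by
  rw [← Set.image_univ, Set.ncard_image_of_injective _ hf, Set.ncard_univ,
    Nat.card_eq_fintype_card]

lemma lrb_witness (k : ℕ) (hk : 0 < k) :
    ∃ (Sig : Set (Run k)) (t : Run k),
      Sig.ncard = k ∧ t ∈ Subsemigroup.closure Sig ∧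
      ∀ Sig' : Set (Run k), Sig' ⊂ Sig → t ∉ Subsemigroup.closure Sig' := by
  refine ⟨Set.range Run.dg, Run.mk0 (k-1) (by omega), ?_, Run.mk0_mem _ _, ?_⟩
  · rw [ncard_range _ Run.dg_inj, Fintype.card_fin]
  · intro Sig' hss ht
    obtain ⟨x, hx1, hx2⟩ := Set.exists_of_ssubset hss
    obtain ⟨a, rfl⟩ := hx1
    have hle : Subsemigroup.closure Sig' ≤ Run.avoidSub (a : ℕ) := by
      rw [Subsemigroup.closure_le]
      intro y hy
      obtain ⟨b, rfl⟩ := hss.subset hy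
      have hba : (b : ℕ) ≠ (a : ℕ) := fun hc => hx2 ((Fin.ext hc : b = a) ▸ hy)
      rw [SetLike.mem_coe, Run.mem_avoidSub, Run.lo_dg, Run.hi_dg]
      omega
    have hmem := hle ht
    rw [Run.mem_avoidSub, Run.lo_mk0, Run.hi_mk0] at hmem
    have ha := a.2
    omega

lemma rrb_witness (k : ℕ) (hk : 0 < k) :
    ∃ (Sig : Set (Run k)ᵐᵒᵖ) (t : (Run k)ᵐᵒᵖ),
      Sig.ncard = k ∧ t ∈ Subsemigroup.closure Sig ∧
      ∀ Sig' : Set (Run k)ᵐᵒᵖ, Sig' ⊂ Sig → t ∉ Subsemigroup.closure Sig' := by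
  refine ⟨Set.range (fun a : Fin k => MulOpposite.op (Run.dg a)),
    MulOpposite.op (Run.mk0 (k-1) (by omega)), ?_, ORun.op_mk0_mem _ _, ?_⟩
  · rw [show (fun a : Fin k => MulOpposite.op (Run.dg a)) = MulOpposite.op ∘ Run.dg from rfl,
      ncard_range _ (MulOpposite.op_injective.comp Run.dg_inj), Fintype.card_fin]
  · intro Sig' hss ht
    obtain ⟨x, hx1, hx2⟩ := Set.exists_of_ssubset hss
    obtain ⟨a, rfl⟩ := hx1
    have hle : Subsemigroup.closure Sig' ≤ ORun.avoidSubOp (a : ℕ) := by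
      rw [Subsemigroup.closure_le]
      intro y hy
      obtain ⟨b, rfl⟩ := hss.subset hy
      have hba : (b : ℕ) ≠ (a : ℕ) := fun hc => hx2 ((Fin.ext hc : b = a) ▸ hy)
      rw [SetLike.mem_coe, ORun.mem_avoidSubOp, MulOpposite.unop_op, Run.lo_dg, Run.hi_dg]
      omega
    have hmem := hle ht
    rw [ORun.mem_avoidSubOp, MulOpposite.unop_op, Run.lo_mk0, Run.hi_mk0] at hmem
    have ha := a.2
    omega

lemma tnil_witness (k : ℕ) (hk : 0 < k) :
    ∃ (Sig : Set (TRun k)) (t : TRun k),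
      Sig.ncard = k ∧ t ∈ Subsemigroup.closure Sig ∧
      ∀ Sig' : Set (TRun k), Sig' ⊂ Sig → t ∉ Subsemigroup.closure Sig' := by
  refine ⟨Set.range TRun.dg, some (Run.mk0 (k-1) (by omega)), ?_, TRun.mk0_mem _ _, ?_⟩
  · rw [ncard_range _ TRun.dg_inj, Fintype.card_fin]
  · intro Sig' hss ht
    obtain ⟨x, hx1, hx2⟩ := Set.exists_of_ssubset hss
    obtain ⟨a, rfl⟩ := hx1
    have hle : Subsemigroup.closure Sig' ≤ TRun.avoidSub (a : ℕ) := by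
      rw [Subsemigroup.closure_le]
      intro y hy
      obtain ⟨b, rfl⟩ := hss.subset hy
      have hba : (b : ℕ) ≠ (a : ℕ) := fun hc => hx2 ((Fin.ext hc : b = a) ▸ hy)
      rw [SetLike.mem_coe, TRun.mem_avoidSub]
      intro r hr
      cases (Option.some_injective _ hr)
      rw [Run.lo_dg, Run.hi_dg]
      omega
    have hmem := hle ht
    rw [TRun.mem_avoidSub] at hmem
    have hmem' := hmem _ rfl
    rw [Run.lo_mk0, Run.hi_mk0] at hmem'
    have ha := a.2
    omega

end Obstr

namespace Obstr

lemma pack {S : Type} [iS : Semigroup S] [fS : Fintype S] (V : Pseudovariety) (N k : ℕ)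
    (hmemV : V.mem S) (hcard : Fintype.card S ≤ N) (hN16 : N ≤ 16 * k * k)
    (Sig : Set S) (t : S)
    (hncard : Sig.ncard = k)
    (htmem : t ∈ Subsemigroup.closure Sig)
    (hproper : ∀ Sig' : Set S, Sig' ⊂ Sig → t ∉ Subsemigroup.closure Sig') :
    @ObstructionWitness V (1/4) N S iS fS := by
  have hq : (1/4 : ℝ) * Real.sqrt N ≤ (Sig.ncard : ℝ) := by
    rw [hncard]; exact quarter_sqrt_le hN16
  refine ⟨hmemV, hcard, Sig, t, hq, htmem, hproper, ?_⟩
  intro L hL htL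
  have hlen := sl_length_ge Sig t hproper L hL htL
  exact le_trans hq (by exact_mod_cast hlen)

end Obstr

/-- a pseudovariety containing all left-regular bands, all right-regular
bands, or all `T`-semigroups requires straight-line programs of length `Ω(√N)`. -/
theorem pseudovariety_containing_obstruction_sqrt_lower_bound
    (V : Pseudovariety)
    (h : (∀ (S : Type) [Semigroup S] [Fintype S], IsLRB S → V.mem S) ∨
         (∀ (S : Type) [Semigroup S] [Fintype S], IsRRB S → V.mem S) ∨
         (∀ (S : Type) [Semigroup S] [Fintype S], IsTNil S → V.mem S)) :
    ∃ ε : ℝ, 0 < ε ∧ ∀ N : ℕ, 1 ≤ N →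
      ∃ (S : Type) (iS : Semigroup S) (fS : Fintype S),
        @ObstructionWitness V ε N S iS fS := by
  refine ⟨1/4, by norm_num, ?_⟩
  intro N hN
  set s := Nat.sqrt N with hs
  have hs1 : 1 ≤ s := Nat.sqrt_pos.mpr hN
  have hlow : s * s ≤ N := Nat.sqrt_le N
  have hhigh : N < (s+1) * (s+1) := Nat.lt_succ_sqrt N
  have hN16 : N ≤ 16 * s * s := by nlinarith
  rcases h with hV | hV | hV
  · obtain ⟨Sig, t, hncard, htmem, hproper⟩ := Obstr.lrb_witness s hs1
    refine ⟨Obstr.Run s, inferInstance, inferInstance, ?_⟩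
    exact Obstr.pack V N s (hV _ Obstr.Run.isLRB)
      (le_trans (Obstr.card_run_le s) hlow) hN16 Sig t hncard htmem hproper
  · obtain ⟨Sig, t, hncard, htmem, hproper⟩ := Obstr.rrb_witness s hs1
    refine ⟨(Obstr.Run s)ᵐᵒᵖ, inferInstance, inferInstance, ?_⟩
    have hcard : Fintype.card (Obstr.Run s)ᵐᵒᵖ ≤ N := by
      rw [Fintype.card_congr (MulOpposite.opEquiv (α := Obstr.Run s)).symm]
      exact le_trans (Obstr.card_run_le s) hlow
    exact Obstr.pack V N s (hV _ Obstr.ORun.isRRB) hcard hN16 Sig t hncard htmem hproper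
  · by_cases hsmall : s ≤ 3
    · -- tiny case: one-point semigroup {none}
      refine ⟨Obstr.TRun 0, inferInstance, inferInstance, ?_⟩
      have hcard : Fintype.card (Obstr.TRun 0) ≤ N := by
        have h0 : Fintype.card (Obstr.Run 0) = 0 :=
          Nat.le_zero.mp (le_trans (Obstr.card_run_le 0) (by norm_num))
        rw [Fintype.card_option, h0]
        omega
      have hproper : ∀ Sig' : Set (Obstr.TRun 0), Sig' ⊂ {(none : Obstr.TRun 0)} →
          (none : Obstr.TRun 0) ∉ Subsemigroup.closure Sig' := by
        intro Sig' hss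
        rw [Set.ssubset_singleton_iff.mp hss, Subsemigroup.closure_empty]
        exact Subsemigroup.notMem_bot
      have hN16' : N ≤ 16 * 1 * 1 := by nlinarith
      refine Obstr.pack V N 1 (hV _ Obstr.TRun.isTNil) hcard hN16'
        {(none : Obstr.TRun 0)} none (Set.ncard_singleton _)
        (Subsemigroup.subset_closure rfl) hproper
    · set k := s - 1 with hk
      have hk3 : 3 ≤ k := by omega
      have hsk : s = k + 1 := by omega
      obtain ⟨Sig, t, hncard, htmem, hproper⟩ := Obstr.tnil_witness k (by omega)
      refine ⟨Obstr.TRun k, inferInstance, inferInstance, ?_⟩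
      have hcard : Fintype.card (Obstr.TRun k) ≤ N := by
        rw [Fintype.card_option]
        have := Obstr.card_run_le k
        nlinarith
      have hN16' : N ≤ 16 * k * k := by nlinarith
      exact Obstr.pack V N k (hV _ Obstr.TRun.isTNil) hcard hN16' Sig t hncard htmem hproper
end

section
/- Let S be a finite semigroup generated by a subset Σ ⊆ S, let k ≥ 1, and let Δ = Σ^{≤ 2k−1} ∩ S^k. Then: (i) Δ generates S^k as a semigroup; (ii) every element of S that does not lie in S^k is a product of at most k − 1 elements of Σ; (iii) for every t ∈ S^k, the straight-line cost satisfies c_S(t; Σ) ≤ (4k − 3) · c_{S^k}(t; Δ). -/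
/-- Product of a nonempty list of semigroup elements (head times the rest). -/
def listProd₁ {S : Type*} [Semigroup S] : S → List S → S
  | a, [] => a
  | a, b :: l => listProd₁ (a * b) l

/-- `Σ^{≤k}`: elements expressible as a nonempty product of at most `k` elements of `Sig`. -/
def ProdLE {S : Type*} [Semigroup S] (Sig : Set S) (k : ℕ) : Set S :=
  { t | ∃ (a : S) (L : List S),
      a ∈ Sig ∧ (∀ x ∈ L, x ∈ Sig) ∧ L.length + 1 ≤ k ∧ listProd₁ a L = t }

/-- `S^k`: the set of all products of exactly `k` elements of `S`. -/
def powSet (S : Type*) [Semigroup S] (k : ℕ) : Set S :=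
  { t | ∃ (a : S) (L : List S), L.length + 1 = k ∧ listProd₁ a L = t }

section Aux
variable {S : Type*} [Semigroup S]

theorem mul_listProd₁ (a b : S) (M : List S) : a * listProd₁ b M = listProd₁ (a * b) M := by
  induction M generalizing b with
  | nil => rfl
  | cons c M ih => show a * listProd₁ (b*c) M = listProd₁ (a*b*c) M; rw [ih, mul_assoc]

theorem listProd₁_append (a : S) (L M : List S) :
    listProd₁ a (L ++ M) = listProd₁ (listProd₁ a L) M := by
  induction L generalizing a with
  | nil => rfl
  | cons b L ih => exact ih (a*b)

theorem listProd₁_mem_closure {Sig : Set S} {a : S} (ha : a ∈ Subsemigroup.closure Sig)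
    {L : List S} (hL : ∀ x ∈ L, x ∈ Sig) : listProd₁ a L ∈ Subsemigroup.closure Sig := by
  induction L generalizing a with
  | nil => exact ha
  | cons b L ih =>
    exact ih (mul_mem ha (Subsemigroup.subset_closure (hL b (by simp))))
      (fun x hx => hL x (by simp [hx]))

theorem mem_closure_iff_prod {Sig : Set S} {t : S} :
    t ∈ Subsemigroup.closure Sig ↔
      ∃ a L, a ∈ Sig ∧ (∀ x ∈ L, x ∈ Sig) ∧ listProd₁ a L = t := by
  constructor
  · intro h
    induction h using Subsemigroup.closure_induction with
    | mem a ha => exact ⟨a, [], ha, by simp, rfl⟩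
    | mul x y _ _ hx hy =>
      obtain ⟨a, L, ha, hL, rfl⟩ := hx
      obtain ⟨b, M, hb, hM, rfl⟩ := hy
      refine ⟨a, L ++ b :: M, ha, ?_, ?_⟩
      · intro x hx
        rcases List.mem_append.1 hx with h | h
        · exact hL x h
        · rcases List.mem_cons.1 h with h | h
          · exact h ▸ hb
          · exact hM x h
      · rw [listProd₁_append]
        show listProd₁ (listProd₁ a L * b) M = _
        rw [mul_listProd₁]
  · rintro ⟨a, L, ha, hL, rfl⟩
    exact listProd₁_mem_closure (Subsemigroup.subset_closure ha) hL

/-- membership-based straight-line condition relative to prefix `P`. -/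
def MSLrel (Sig : Set S) (P B : List S) : Prop :=
  ∀ n (h : n < B.length), B[n] ∈ Sig ∨
    ∃ x ∈ P ++ B.take n, ∃ y ∈ P ++ B.take n, B[n] = x * y

theorem MSLrel_nil {Sig : Set S} {P : List S} : MSLrel Sig P [] := by
  intro n hn; simp at hn

theorem MSLrel_cons {Sig : Set S} {P B : List S} {c : S}
    (hc : c ∈ Sig ∨ ∃ x ∈ P, ∃ y ∈ P, c = x * y)
    (h : MSLrel Sig (P ++ [c]) B) : MSLrel Sig P (c :: B) := by
  intro n hn
  cases n with
  | zero =>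
    rcases hc with hc | ⟨x, hx, y, hy, hxy⟩
    · exact Or.inl hc
    · exact Or.inr ⟨x, by simp [hx], y, by simp [hy], hxy⟩
  | succ n =>
    have hn' : n < B.length := by simpa using hn
    rcases h n hn' with h | ⟨x, hx, y, hy, hxy⟩
    · exact Or.inl (by simpa using h)
    · refine Or.inr ⟨x, ?_, y, ?_, by simpa using hxy⟩ <;>
      · simp only [List.append_assoc, List.singleton_append, List.take_succ_cons] at *
        assumption

theorem MSLrel_append {Sig : Set S} {P L B : List S}
    (h1 : MSLrel Sig P L) (h2 : MSLrel Sig (P ++ L) B) : MSLrel Sig P (L ++ B) := by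
  intro n hn
  rcases Nat.lt_or_ge n L.length with h | h
  · have e1 : (L ++ B)[n] = L[n] := List.getElem_append_left h
    have e2 : (L ++ B).take n = L.take n := by
      rw [List.take_append, Nat.sub_eq_zero_of_le h.le]
      simp
    rw [e1, e2]
    exact h1 n h
  · have hn' : n - L.length < B.length := by
      rw [List.length_append] at hn; omega
    have e1 : (L ++ B)[n] = B[n - L.length] := List.getElem_append_right h
    have e2 : (L ++ B).take n = L ++ B.take (n - L.length) := by
      rw [List.take_append, List.take_of_length_le h]
    rw [e1, e2, ← List.append_assoc]
    exact h2 _ hn'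

theorem MSLrel_prefix {Sig : Set S} {P L B : List S}
    (h : MSLrel Sig P (L ++ B)) : MSLrel Sig P L := by
  intro n hn
  have hn' : n < (L ++ B).length := by rw [List.length_append]; omega
  have e1 : (L ++ B)[n]'hn' = L[n] := List.getElem_append_left hn
  have e2 : (L ++ B).take n = L.take n := by
    rw [List.take_append, Nat.sub_eq_zero_of_le hn.le]
    simp
  have := h n hn'
  rw [e1, e2] at this
  exact this

theorem MSLrel_replicate {Sig : Set S} {P : List S} {c : S} (m : ℕ)
    (hc : c ∈ Sig ∨ ∃ x ∈ P, ∃ y ∈ P, c = x * y) : MSLrel Sig P (List.replicate m c) := by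
  induction m generalizing P with
  | zero => exact MSLrel_nil
  | succ m ih =>
    rw [List.replicate_succ]
    refine MSLrel_cons hc (ih ?_)
    rcases hc with hc | ⟨x, hx, y, hy, hxy⟩
    · exact Or.inl hc
    · exact Or.inr ⟨x, by simp [hx], y, by simp [hy], hxy⟩

theorem isSLSeq_iff_MSLrel {Sig : Set S} {L : List S} :
    IsSLSeq Sig L ↔ MSLrel Sig [] L := by
  have hmem : ∀ (n : ℕ) (x : S), x ∈ L.take n ↔ ∃ i : Fin L.length, (i : ℕ) < n ∧ L.get i = x := by
    intro n x
    constructor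
    · intro hx
      obtain ⟨i, hi, hg⟩ := List.mem_iff_getElem.1 hx
      have hi' : i < L.length ∧ i < n := by
        have := hi; rw [List.length_take] at this; omega
      exact ⟨⟨i, hi'.1⟩, hi'.2, by rw [← hg, List.getElem_take]; rfl⟩
    · rintro ⟨i, hi, rfl⟩
      have : i < (L.take n).length := by rw [List.length_take]; omega
      exact List.mem_iff_getElem.2 ⟨i, this, by rw [List.getElem_take]; rfl⟩
  constructor
  · intro h n hn
    rcases h ⟨n, hn⟩ with h | ⟨i, j, hi, hj, hij⟩
    · exact Or.inl h
    · refine Or.inr ⟨L.get i, ?_, L.get j, ?_, hij⟩ <;> simp only [List.nil_append]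
      · exact (hmem n _).2 ⟨i, hi, rfl⟩
      · exact (hmem n _).2 ⟨j, hj, rfl⟩
  · intro h m
    rcases h m m.isLt with h | ⟨x, hx, y, hy, hxy⟩
    · exact Or.inl h
    · simp only [List.nil_append] at hx hy
      obtain ⟨i, hi, rfl⟩ := (hmem _ _).1 hx
      obtain ⟨j, hj, rfl⟩ := (hmem _ _).1 hy
      exact Or.inr ⟨i, j, hi, hj, hxy⟩

/-- the straight-line segment computing `listProd₁ a L`, not including `a` itself. -/
def seg : S → List S → List S
  | _, [] => []
  | a, b :: L => b :: (a * b) :: seg (a * b) L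

theorem seg_length (a : S) (L : List S) : (seg a L).length = 2 * L.length := by
  induction L generalizing a with
  | nil => rfl
  | cons b L ih => simp [seg, ih]; ring

theorem prod_mem_seg (a : S) (L : List S) : listProd₁ a L ∈ a :: seg a L := by
  induction L generalizing a with
  | nil => simp [listProd₁, seg]
  | cons b L ih =>
    have := ih (a * b)
    show listProd₁ (a*b) L ∈ a :: b :: (a*b) :: seg (a*b) L
    rcases List.mem_cons.1 this with h | h
    · simp [h]
    · simp [h]

/-- for nonempty `L`, the product is a product of two elements of the segment list. -/
theorem prod_eq_mul {a b : S} {L : List S} :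
    ∃ x ∈ a :: seg a (b :: L), ∃ y ∈ a :: seg a (b :: L),
      listProd₁ a (b :: L) = x * y := by
  induction L generalizing a b with
  | nil => exact ⟨a, by simp [seg], b, by simp [seg], rfl⟩
  | cons c L ih =>
    obtain ⟨x, hx, y, hy, hxy⟩ := ih (a := a * b) (b := c)
    refine ⟨x, ?_, y, ?_, hxy⟩ <;>
    · show _ ∈ a :: b :: (a*b) :: seg (a*b) (c :: L)
      simp only [List.mem_cons] at *
      tauto

theorem seg_MSLrel {Sig : Set S} {a : S} {L P : List S} (ha : a ∈ P)
    (hL : ∀ x ∈ L, x ∈ Sig) : MSLrel Sig P (seg a L) := by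
  induction L generalizing a P with
  | nil => intro n hn; simp [seg] at hn
  | cons b L ih =>
    show MSLrel Sig P (b :: (a*b) :: seg (a*b) L)
    intro n hn
    match n with
    | 0 => exact Or.inl (hL b (by simp))
    | 1 =>
      refine Or.inr ⟨a, by simp [ha], b, by simp, rfl⟩
    | (n+2) =>
      have hab : a * b ∈ P ++ [b, a*b] := by simp
      have h := ih (a := a*b) (P := P ++ [b, a*b]) hab (fun x hx => hL x (by simp [hx]))
      have hn' : n < (seg (a*b) L).length := by simpa using hn
      rcases h n hn' with h | ⟨x, hx, y, hy, hxy⟩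
      · exact Or.inl (by simpa using h)
      · refine Or.inr ⟨x, ?_, y, ?_, by simpa using hxy⟩ <;>
        · simp only [List.take_succ_cons, List.cons_append, List.append_assoc,
            List.nil_append, List.mem_append, List.mem_cons] at *
          tauto

theorem mem_powSet_of_long {k : ℕ} (hk : 1 ≤ k) (a : S) (L : List S)
    (h : k ≤ L.length + 1) : listProd₁ a L ∈ powSet S k := by
  refine ⟨listProd₁ a (L.take (L.length + 1 - k)), L.drop (L.length + 1 - k), ?_, ?_⟩
  · rw [List.length_drop]; omega
  · rw [← listProd₁_append, List.take_append_drop]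

theorem powSet_mul_mem {k : ℕ} {x y : S} (hy : y ∈ powSet S k) : x * y ∈ powSet S k := by
  obtain ⟨b, M, hM, rfl⟩ := hy
  exact ⟨x * b, M, hM, (mul_listProd₁ x b M).symm⟩

/-- any product of `≥ k` generators lies in the closure of `Δ = Σ^{≤2k-1} ∩ S^k`. -/
theorem long_mem_closure {Sig : Set S} {k : ℕ} (hk : 1 ≤ k) :
    ∀ n (a : S) (L : List S), L.length = n → a ∈ Sig → (∀ x ∈ L, x ∈ Sig) →
      k ≤ L.length + 1 →
      listProd₁ a L ∈ Subsemigroup.closure (ProdLE Sig (2 * k - 1) ∩ powSet S k) := by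
  intro n
  induction n using Nat.strong_induction_on with
  | _ n ih =>
    intro a L hLn ha hL hkL
    rcases le_or_gt (L.length + 1) (2 * k - 1) with hs | hs
    · exact Subsemigroup.subset_closure
        ⟨⟨a, L, ha, hL, hs, rfl⟩, mem_powSet_of_long hk a L hkL⟩
    · have hd : k - 1 < L.length := by omega
      set L₁ := L.take (k - 1) with hL₁
      have hdrop : ∃ c L₂, L.drop (k - 1) = c :: L₂ := by
        rcases hD : L.drop (k - 1) with _ | ⟨c, L₂⟩
        · exfalso; have := List.length_drop (i := k-1) (l := L); rw [hD] at this; simp at this; omega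
        · exact ⟨_, _, rfl⟩
      obtain ⟨c, L₂, hD⟩ := hdrop
      have hsplit : listProd₁ a L = listProd₁ a (L₁ ++ c :: L₂) := by
        rw [hL₁, ← hD, List.take_append_drop]
      have hlen₁ : L₁.length = k - 1 := by rw [hL₁, List.length_take]; omega
      have hlen₂ : L₂.length + 1 = L.length - (k - 1) := by
        have := List.length_drop (i := k-1) (l := L); rw [hD] at this; simp at this; omega
      have hu : listProd₁ a L₁ ∈ ProdLE Sig (2*k-1) ∩ powSet S k := by
        refine ⟨⟨a, L₁, ha, fun x hx => hL x (List.take_subset _ _ hx), by omega, rfl⟩, ?_⟩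
        exact mem_powSet_of_long hk a L₁ (by omega)
      have hv : listProd₁ c L₂ ∈ Subsemigroup.closure (ProdLE Sig (2 * k - 1) ∩ powSet S k) := by
        refine ih L₂.length (by omega) c L₂ rfl ?_ ?_ (by omega)
        · exact hL c (by rw [← List.take_append_drop (k-1) L, hD]; simp)
        · intro x hx
          exact hL x (by rw [← List.take_append_drop (k-1) L, hD]; simp [hx])
      have : listProd₁ a L = listProd₁ a L₁ * listProd₁ c L₂ := by
        rw [hsplit, listProd₁_append, mul_listProd₁]; rfl
      rw [this]
      exact mul_mem (Subsemigroup.subset_closure hu) hv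

/-- every element of `S` has some `Σ`-factorization at least as long as a given product. -/
theorem lengthen (Sig : Set S)
    (hall : ∀ s : S, ∃ a L, a ∈ Sig ∧ (∀ x ∈ L, x ∈ Sig) ∧ listProd₁ a L = s) :
    ∀ (L : List S) (a : S), ∃ a' L', a' ∈ Sig ∧ (∀ x ∈ L', x ∈ Sig) ∧
      L.length ≤ L'.length ∧ listProd₁ a' L' = listProd₁ a L := by
  intro L
  induction L using List.reverseRecOn with
  | nil =>
    intro a
    obtain ⟨a', L', h1, h2, h3⟩ := hall a
    exact ⟨a', L', h1, h2, by simp, h3⟩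
  | append_singleton L b ihL =>
    intro a
    obtain ⟨a', L', h1, h2, h3, h4⟩ := ihL a
    obtain ⟨c, M, hc1, hc2, hc3⟩ := hall b
    refine ⟨a', L' ++ c :: M, h1, ?_, ?_, ?_⟩
    · intro x hx
      rcases List.mem_append.1 hx with h | h
      · exact h2 x h
      · rcases List.mem_cons.1 h with h | h
        · exact h ▸ hc1
        · exact hc2 x h
    · simp; omega
    · rw [listProd₁_append, listProd₁_append]
      show listProd₁ (listProd₁ a' L' * c) M = _
      rw [← mul_listProd₁, hc3, h4]
      rfl

/-- the main straight-line construction: a `Δ`-straight-line sequence of length `n`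
yields a `Σ`-straight-line sequence of length `(4k-3) n` containing all its elements. -/
theorem build {Sig : Set S} {k : ℕ} (hk : 1 ≤ k) (M : List S)
    (hM : MSLrel (ProdLE Sig (2*k-1) ∩ powSet S k) [] M) :
    ∃ N : List S, MSLrel Sig [] N ∧ N.length = (4*k-3) * M.length ∧ ∀ g ∈ M, g ∈ N := by
  induction M using List.reverseRecOn with
  | nil => exact ⟨[], MSLrel_nil, by simp, by simp⟩
  | append_singleton M g ihM =>
    obtain ⟨N, hN, hNlen, hNmem⟩ := ihM (MSLrel_prefix hM)
    have hlast := hM M.length (by simp)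
    have e1 : (M ++ [g])[M.length]'(by simp) = g := by
      rw [List.getElem_append_right le_rfl]
      simp
    have e2 : (M ++ [g]).take M.length = M := by
      rw [List.take_append]
      simp
    rw [e1, e2] at hlast
    simp only [List.nil_append] at hlast
    rcases hlast with ⟨⟨a, L, ha, hL, hlen, hprod⟩, hgpow⟩ | ⟨x, hx, y, hy, hxy⟩
    · -- g is a Δ-generator: expand it as a Σ-product segment, then pad
      have hseglen : 2 * L.length + 1 ≤ 4 * k - 3 := by omega
      set B : List S := (a :: seg a L) ++ List.replicate (4*k-3 - (2*L.length+1)) g with hB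
      have hB1 : MSLrel Sig N (a :: seg a L) := by
        refine MSLrel_cons (Or.inl ha) (seg_MSLrel (by simp) hL)
      have hgcond : g ∈ Sig ∨
          ∃ x ∈ N ++ (a :: seg a L), ∃ y ∈ N ++ (a :: seg a L), g = x * y := by
        cases L with
        | nil => exact Or.inl (hprod ▸ ha)
        | cons b L' =>
          obtain ⟨x, hx, y, hy, hxy⟩ := prod_eq_mul (a := a) (b := b) (L := L')
          exact Or.inr ⟨x, by simp [List.mem_append, hx], y,
            by simp [List.mem_append, hy], hprod ▸ hxy⟩
      have hBmsl : MSLrel Sig N B :=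
        MSLrel_append hB1 (MSLrel_replicate _ hgcond)
      refine ⟨N ++ B, ?_, ?_, ?_⟩
      · exact MSLrel_append hN (by simpa using hBmsl)
      · rw [List.length_append, hNlen, hB, List.length_append, List.length_cons,
          seg_length, List.length_replicate, List.length_append, List.length_singleton]
        ring_nf
        omega
      · intro h hh
        rcases List.mem_append.1 hh with h' | h'
        · exact List.mem_append.2 (Or.inl (hNmem h h'))
        · have : h = g := by simpa using h'
          subst this
          refine List.mem_append.2 (Or.inr ?_)
          rw [hB]
          exact List.mem_append.2 (Or.inl (hprod ▸ prod_mem_seg a L))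
    · -- g is a product of two earlier entries
      have hxN : x ∈ N := hNmem x hx
      have hyN : y ∈ N := hNmem y hy
      have hBmsl : MSLrel Sig N (List.replicate (4*k-3) g) :=
        MSLrel_replicate _ (Or.inr ⟨x, hxN, y, hyN, hxy⟩)
      refine ⟨N ++ List.replicate (4*k-3) g, ?_, ?_, ?_⟩
      · exact MSLrel_append hN (by simpa using hBmsl)
      · rw [List.length_append, hNlen, List.length_replicate, List.length_append,
          List.length_singleton]
        ring
      · intro h hh
        rcases List.mem_append.1 hh with h' | h'
        · exact List.mem_append.2 (Or.inl (hNmem h h'))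
        · have : h = g := by simpa using h'
          subst this
          refine List.mem_append.2 (Or.inr ?_)
          exact List.mem_replicate.2 ⟨by omega, rfl⟩

end Aux

/-- with `Δ = Σ^{≤2k−1} ∩ S^k`: (i) `Δ` generates `S^k`; (ii) elements
outside `S^k` are short products of generators; (iii) `c_S(t;Σ) ≤ (4k−3)·c_{S^k}(t;Δ)`. -/
theorem nilpotent_extension_cost_reduction
    (S : Type*) [Semigroup S] [Fintype S] (Sig : Set S)
    (hgen : Subsemigroup.closure Sig = ⊤) (k : ℕ) (hk : 1 ≤ k) :
    (Subsemigroup.closure (ProdLE Sig (2 * k - 1) ∩ powSet S k) : Set S) = powSet S k ∧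
    (∀ t : S, t ∉ powSet S k → t ∈ ProdLE Sig (k - 1)) ∧
    (∀ t : S, t ∈ powSet S k →
      slCost Sig t ≤ (4 * k - 3) * slCost (ProdLE Sig (2 * k - 1) ∩ powSet S k) t) := by
  have hall : ∀ s : S, ∃ a L, a ∈ Sig ∧ (∀ x ∈ L, x ∈ Sig) ∧ listProd₁ a L = s := by
    intro s
    have : s ∈ Subsemigroup.closure Sig := by rw [hgen]; trivial
    exact mem_closure_iff_prod.1 this
  set Δ : Set S := ProdLE Sig (2 * k - 1) ∩ powSet S k with hΔ
  have part1sub : ∀ t ∈ powSet S k, t ∈ Subsemigroup.closure Δ := by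
    rintro t ⟨a, L, hlen, rfl⟩
    obtain ⟨a', L', h1, h2, h3, h4⟩ := lengthen Sig hall L a
    rw [← h4]
    exact long_mem_closure hk L'.length a' L' rfl h1 h2 (by omega)
  have part1 : (Subsemigroup.closure Δ : Set S) = powSet S k := by
    apply Set.Subset.antisymm
    · intro t ht
      have : Subsemigroup.closure Δ ≤
          ⟨powSet S k, fun {x y} _ hy => powSet_mul_mem hy⟩ :=
        Subsemigroup.closure_le.2 Set.inter_subset_right
      exact this ht
    · exact part1sub
  refine ⟨part1, ?_, ?_⟩
  · intro t ht
    obtain ⟨a, L, h1, h2, h3⟩ := hall t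
    refine ⟨a, L, h1, h2, ?_, h3⟩
    by_contra hcon
    exact ht (h3 ▸ mem_powSet_of_long hk a L (by omega))
  · intro t ht
    -- nonemptiness of the Δ-cost set
    obtain ⟨a, L, ha, hL, hprod⟩ := mem_closure_iff_prod.1 (part1sub t ht)
    have hseq : IsSLSeq Δ (a :: seg a L) := by
      rw [isSLSeq_iff_MSLrel]
      exact MSLrel_cons (Or.inl ha) (seg_MSLrel (by simp) hL)
    have hne : {n : ℕ | ∃ L : List S, IsSLSeq Δ L ∧ t ∈ L ∧ L.length = n}.Nonempty :=
      ⟨(a :: seg a L).length, a :: seg a L, hseq, hprod ▸ prod_mem_seg a L, rfl⟩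
    obtain ⟨M, hMsl, htM, hMlen⟩ := Nat.sInf_mem hne
    obtain ⟨N, hNsl, hNlen, hNmem⟩ := build hk M (isSLSeq_iff_MSLrel.1 hMsl)
    have : slCost Sig t ≤ N.length :=
      Nat.sInf_le ⟨N, isSLSeq_iff_MSLrel.2 hNsl, hNmem t htM, rfl⟩
    calc slCost Sig t ≤ N.length := this
      _ = (4 * k - 3) * slCost Δ t := by rw [hNlen, hMlen]; rfl
end

section
/- Let k ≥ 1 and let S be a finite semigroup satisfying u·x·y·v = u·y·x·v for all u, v ∈ S^k and all x, y ∈ S. Then there exists a constant C depending only on k such that for every subset Σ ⊆ S and every t in the subsemigroup generated by Σ, there is a straight-line program over Σ of width 2 and length at most C·(log₂|S| + 1) computing t. -/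
/-- An instruction of a straight-line program with `w` registers: either load a
generator into a register, or assign the product of two registers to a register. -/
inductive SLPInstr (S : Type*) (w : ℕ) where
  | load (k : Fin w) (s : S) : SLPInstr S w
  | mul (k i j : Fin w) : SLPInstr S w

/-- Execute one instruction on the register state. -/
def SLPStep {S : Type*} [Semigroup S] {w : ℕ} (st : Fin w → Option S) :
    SLPInstr S w → (Fin w → Option S)
  | .load k s => Function.update st k (some s)
  | .mul k i j => Function.update st k (Option.map₂ (· * ·) (st i) (st j))

/-- The list of register states during the execution (all registers start empty). -/
def SLPStates {S : Type*} [Semigroup S] {w : ℕ} (P : List (SLPInstr S w)) :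
    List (Fin w → Option S) :=
  List.scanl SLPStep (fun _ => none) P

/-- Validity of a straight-line program over `Sig`: loads use elements of `Sig`, and
multiplications only use registers that have been assigned earlier. -/
def SLPValid {S : Type*} [Semigroup S] {w : ℕ} (Sig : Set S) (P : List (SLPInstr S w)) : Prop :=
  ∀ m : Fin P.length,
    match P.get m with
    | SLPInstr.load _ s => s ∈ Sig
    | SLPInstr.mul _ i j =>
        ((SLPStates P).getD (m : ℕ) (fun _ => none)) i ≠ none ∧
        ((SLPStates P).getD (m : ℕ) (fun _ => none)) j ≠ none

/-- The program computes `t` if at some point during execution a register holds `t`. -/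
def SLPComputes {S : Type*} [Semigroup S] {w : ℕ} (P : List (SLPInstr S w)) (t : S) : Prop :=
  ∃ st ∈ SLPStates P, ∃ k : Fin w, st k = some t


section Lists
variable {S : Type*} [Semigroup S]

lemma lp_mul (l : List S) (x y : S) : listProd₁ (x * y) l = x * listProd₁ y l := by
  induction l generalizing y with
  | nil => rfl
  | cons c l ih =>
      show listProd₁ (x * y * c) l = x * listProd₁ (y * c) l
      rw [mul_assoc, ih]

lemma lp_concat (l l' : List S) (a : S) :
    listProd₁ a (l ++ l') = listProd₁ (listProd₁ a l) l' := by
  induction l generalizing a with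
  | nil => rfl
  | cons b l ih => exact ih (a * b)

lemma lp_append (a b : S) (l l' : List S) :
    listProd₁ a (l ++ b :: l') = listProd₁ a l * listProd₁ b l' := by
  rw [lp_concat]
  show listProd₁ (listProd₁ a l * b) l' = _
  rw [lp_mul]

lemma mem_powSet_of_len {k : ℕ} {a : S} {l : List S} (h : l.length + 1 = k) :
    listProd₁ a l ∈ powSet S k := ⟨a, l, h, rfl⟩

lemma left_decomp {k : ℕ} (hk : 1 ≤ k) (a : S) (A : List S) (h : k ≤ A.length + 1) :
    ∃ u ∈ powSet S k, listProd₁ a A = u ∨ ∃ c : S, listProd₁ a A = c * u := by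
  rcases Nat.eq_or_lt_of_le h with heq | hlt
  · exact ⟨listProd₁ a A, mem_powSet_of_len heq.symm, Or.inl rfl⟩
  · have hkA : k ≤ A.length := by omega
    cases hD : A.drop (A.length - k) with
    | nil =>
        have := List.drop_eq_nil_iff.mp hD
        omega
    | cons d D' =>
        have hA : A = A.take (A.length - k) ++ d :: D' := by rw [← hD, List.take_append_drop]
        have hlen : D'.length + 1 = k := by
          have := congrArg List.length hD
          simp [List.length_drop] at this
          omega
        refine ⟨listProd₁ d D', mem_powSet_of_len hlen,
          Or.inr ⟨listProd₁ a (A.take (A.length - k)), ?_⟩⟩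
        conv_lhs => rw [hA]
        exact lp_append _ _ _ _

lemma right_decomp {k : ℕ} (hk : 1 ≤ k) (b : S) (B : List S) (h : k ≤ B.length + 1) :
    ∃ v ∈ powSet S k, listProd₁ b B = v ∨ ∃ d : S, listProd₁ b B = v * d := by
  cases hD : B.drop (k-1) with
  | nil =>
      have : B.length ≤ k - 1 := List.drop_eq_nil_iff.mp hD
      exact ⟨listProd₁ b B, mem_powSet_of_len (by omega), Or.inl rfl⟩
  | cons d D' =>
      have hlenD : k - 1 ≤ B.length := by
        by_contra hc
        rw [List.drop_eq_nil_of_le (by omega)] at hD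
        cases hD
      have hB : B = B.take (k-1) ++ d :: D' := by rw [← hD, List.take_append_drop]
      have hlen : (B.take (k-1)).length + 1 = k := by
        rw [List.length_take]
        omega
      refine ⟨listProd₁ b (B.take (k-1)), mem_powSet_of_len hlen,
        Or.inr ⟨listProd₁ d D', ?_⟩⟩
      conv_lhs => rw [hB]
      exact lp_append _ _ _ _

variable {k : ℕ} (hk : 1 ≤ k)
variable (hyp : ∀ u ∈ powSet S k, ∀ v ∈ powSet S k, ∀ x y : S, u * x * y * v = u * y * x * v)
include hk hyp

lemma swap_mid (a x y : S) (A R : List S) (hA : k ≤ A.length + 1) (hR : k ≤ R.length) :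
    listProd₁ a (A ++ x :: y :: R) = listProd₁ a (A ++ y :: x :: R) := by
  cases R with
  | nil => simp at hR; omega
  | cons b B =>
      have hBlen : k ≤ B.length + 1 := by simpa using hR
      have key : ∀ wa wb x y : S,
          (wa ∈ powSet S k ∨ ∃ c, ∃ u ∈ powSet S k, wa = c * u) →
          (wb ∈ powSet S k ∨ ∃ d, ∃ v ∈ powSet S k, wb = v * d) →
          wa * x * y * wb = wa * y * x * wb := by
        rintro wa wb x y (hu | ⟨c, u, hu, rfl⟩) (hv | ⟨d, v, hv, rfl⟩)
        · exact hyp _ hu _ hv x y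
        · simp only [mul_assoc]
          have h' : wa * (x * (y * (v * d))) = wa * (y * (x * (v * d))) := by
            simpa only [mul_assoc] using congrArg (· * d) (hyp _ hu _ hv x y)
          exact h'
        · simp only [mul_assoc]
          have h' : u * (x * (y * wb)) = u * (y * (x * wb)) := by
            simpa only [mul_assoc] using hyp _ hu _ hv x y
          rw [h']
        · simp only [mul_assoc]
          have h' : u * (x * (y * (v * d))) = u * (y * (x * (v * d))) := by
            simpa only [mul_assoc] using congrArg (· * d) (hyp _ hu _ hv x y)
          rw [h']
      obtain ⟨u, hu, hwa⟩ := left_decomp (k := k) hk a A hA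
      obtain ⟨v, hv, hwb⟩ := right_decomp (k := k) hk b B hBlen
      have hxy : listProd₁ x [y] = x * y := rfl
      have hyx : listProd₁ y [x] = y * x := rfl
      have e1 : listProd₁ a (A ++ x :: y :: b :: B)
          = listProd₁ a A * x * y * listProd₁ b B := by
        rw [show A ++ x :: y :: b :: B = A ++ x :: ([y] ++ b :: B) from rfl,
          lp_append, lp_append, hxy]
        simp [mul_assoc]
      have e2 : listProd₁ a (A ++ y :: x :: b :: B)
          = listProd₁ a A * y * x * listProd₁ b B := by
        rw [show A ++ y :: x :: b :: B = A ++ y :: ([x] ++ b :: B) from rfl,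
          lp_append, lp_append, hyx]
        simp [mul_assoc]
      rw [e1, e2]
      apply key
      · rcases hwa with h | ⟨c, h⟩
        · exact Or.inl (h ▸ hu)
        · exact Or.inr ⟨c, u, hu, h⟩
      · rcases hwb with h | ⟨d, h⟩
        · exact Or.inl (h ▸ hv)
        · exact Or.inr ⟨d, v, hv, h⟩

lemma perm_mid {m m' : List S} (hp : m.Perm m') :
    ∀ (a : S) (A R : List S), k ≤ A.length + 1 → k ≤ R.length →
      listProd₁ a (A ++ (m ++ R)) = listProd₁ a (A ++ (m' ++ R)) := by
  induction hp with
  | nil => intro a A R _ _; rfl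
  | cons x h ih =>
      intro a A R hA hR
      have := ih a (A ++ [x]) R (by simp; omega) hR
      simpa [List.append_assoc] using this
  | swap x y l =>
      intro a A R hA hR
      have := swap_mid hk hyp a y x A (l ++ R) hA (by simp; omega)
      simpa [List.append_assoc] using this
  | trans h₁ h₂ ih₁ ih₂ =>
      intro a A R hA hR
      rw [ih₁ a A R hA hR, ih₂ a A R hA hR]

end Lists

lemma exists_word {S : Type*} [Semigroup S] {Sig : Set S} {t : S}
    (ht : t ∈ Subsemigroup.closure Sig) :
    ∃ (a : S) (l : List S), a ∈ Sig ∧ (∀ x ∈ l, x ∈ Sig) ∧ listProd₁ a l = t := by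
  induction ht using Subsemigroup.closure_induction with
  | mem x hx => exact ⟨x, [], hx, by simp, rfl⟩
  | mul x y _ _ hx hy =>
      obtain ⟨a, l, ha, hl, hx'⟩ := hx
      obtain ⟨b, m, hb, hm, hy'⟩ := hy
      refine ⟨a, l ++ b :: m, ha, ?_, by rw [lp_append, hx', hy']⟩
      intro z hz
      rcases List.mem_append.mp hz with h | h
      · exact hl z h
      rcases List.mem_cons.mp h with rfl | h
      · exact hb
      · exact hm z h

section Ops
variable {S : Type} [Semigroup S]

/-- abstract two-register operations -/
inductive Op (S : Type) where
  | init (s : S) | mulR (s : S) | mulL (s : S) | sq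

def dOp : Op S → Option S → Option S
  | .init s, _ => some s
  | .mulR s, x => x.map (· * s)
  | .mulL s, x => x.map (s * ·)
  | .sq, x => x.map (fun a => a * a)

def evalOps (ops : List (Op S)) (x : Option S) : Option S :=
  ops.foldl (fun x o => dOp o x) x

def argOK (Sig : Set S) : Op S → Prop
  | .init s => s ∈ Sig | .mulR s => s ∈ Sig | .mulL s => s ∈ Sig | .sq => True

def safe : Option S → List (Op S) → Prop
  | _, [] => True
  | x, o :: rest =>
      (match o with | .init _ => True | _ => x ≠ none) ∧ safe (dOp o x) rest

def compileOp : Op S → List (SLPInstr S 2)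
  | .init s => [.load 0 s]
  | .mulR s => [.load 1 s, .mul 0 0 1]
  | .mulL s => [.load 1 s, .mul 0 1 0]
  | .sq => [.mul 0 0 0]

def compile (ops : List (Op S)) : List (SLPInstr S 2) := ops.flatMap compileOp

/-- recursive validity from a given starting state -/
def ValidFrom (Sig : Set S) : (Fin 2 → Option S) → List (SLPInstr S 2) → Prop
  | _, [] => True
  | st, i :: P => (match i with
      | .load _ s => s ∈ Sig
      | .mul _ a b => st a ≠ none ∧ st b ≠ none) ∧ ValidFrom Sig (SLPStep st i) P

lemma validFrom_cons {Sig : Set S} (st : Fin 2 → Option S) (i : SLPInstr S 2)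
    (P : List (SLPInstr S 2)) :
    ValidFrom Sig st (i :: P) ↔ (match i with
      | SLPInstr.load _ s => s ∈ Sig
      | SLPInstr.mul _ a b => st a ≠ none ∧ st b ≠ none) ∧
      ValidFrom Sig (SLPStep st i) P := Iff.rfl

lemma safe_cons (x : Option S) (o : Op S) (P : List (Op S)) :
    safe x (o :: P) ↔ (match o with
      | Op.init _ => True | _ => x ≠ none) ∧ safe (dOp o x) P := Iff.rfl

lemma validFrom_append {Sig : Set S} :
    ∀ (P Q : List (SLPInstr S 2)) (st : Fin 2 → Option S),
      ValidFrom Sig st (P ++ Q) ↔ ValidFrom Sig st P ∧ ValidFrom Sig (P.foldl SLPStep st) Q := by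
  intro P
  induction P with
  | nil => intro Q st; simp [ValidFrom]
  | cons i P ih =>
      intro Q st
      have h3 : List.foldl SLPStep st (i :: P) = List.foldl SLPStep (SLPStep st i) P := rfl
      rw [List.cons_append, validFrom_cons, validFrom_cons, h3, ih, and_assoc]

lemma safe_append : ∀ (P Q : List (Op S)) (x : Option S),
    safe x (P ++ Q) ↔ safe x P ∧ safe (evalOps P x) Q := by
  intro P
  induction P with
  | nil => intro Q x; simp [safe, evalOps]
  | cons o P ih =>
      intro Q x
      have h3 : evalOps (o :: P) x = evalOps P (dOp o x) := rfl
      rw [List.cons_append, safe_cons, safe_cons, h3, ih, and_assoc]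

lemma evalOps_append (P Q : List (Op S)) (x : Option S) :
    evalOps (P ++ Q) x = evalOps Q (evalOps P x) := by
  simp [evalOps, List.foldl_append]

/-- the index-style validity (as in SLPValid), from an arbitrary start state -/
def IdxValid (Sig : Set S) (st : Fin 2 → Option S) (P : List (SLPInstr S 2)) : Prop :=
  ∀ m : Fin P.length,
    match P.get m with
    | SLPInstr.load _ s => s ∈ Sig
    | SLPInstr.mul _ i j =>
        ((List.scanl SLPStep st P).getD (m : ℕ) (fun _ => none)) i ≠ none ∧
        ((List.scanl SLPStep st P).getD (m : ℕ) (fun _ => none)) j ≠ none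

lemma idxValid_iff_validFrom {Sig : Set S} :
    ∀ (P : List (SLPInstr S 2)) (st : Fin 2 → Option S),
      IdxValid Sig st P ↔ ValidFrom Sig st P := by
  intro P
  induction P with
  | nil =>
      intro st
      constructor
      · intro _; trivial
      · intro _ m; exact absurd m.2 (by simp)
  | cons i P ih =>
      intro st
      constructor
      · intro h
        refine ⟨?_, (ih (SLPStep st i)).mp ?_⟩
        · have h0 := h ⟨0, by simp⟩
          simpa [List.scanl_cons] using h0
        · intro m
          have hm := h ⟨m.1 + 1, by simpa using Nat.succ_lt_succ m.2⟩
          simpa [List.scanl_cons] using hm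
      · rintro ⟨h1, h2⟩ m
        rcases m with ⟨mv, hmv⟩
        cases mv with
        | zero => simpa [List.scanl_cons] using h1
        | succ mv' =>
            have := (ih (SLPStep st i)).mpr h2 ⟨mv', by simpa using Nat.lt_of_succ_lt_succ hmv⟩
            simpa [List.scanl_cons] using this

lemma slpValid_of_validFrom {Sig : Set S} {P : List (SLPInstr S 2)}
    (h : ValidFrom Sig (fun _ => none) P) : SLPValid Sig P := by
  have h2 := (idxValid_iff_validFrom P (fun _ => none)).mpr h
  unfold IdxValid at h2
  unfold SLPValid SLPStates
  intro m
  have h3 := h2 m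
  cases hg : P.get m with
  | load k s => simp only [hg] at h3 ⊢; exact h3
  | mul k i j => simp only [hg] at h3 ⊢; exact h3

lemma foldl_mem_scanl : ∀ (P : List (SLPInstr S 2)) (st : Fin 2 → Option S),
    P.foldl SLPStep st ∈ List.scanl SLPStep st P := by
  intro P
  induction P with
  | nil => intro st; simp
  | cons i P ih => intro st; rw [List.scanl_cons]; simpa using Or.inr (ih (SLPStep st i))

/-- main compile correctness -/
lemma compile_ok {Sig : Set S} : ∀ (ops : List (Op S)) (st : Fin 2 → Option S),
    safe (st 0) ops → (∀ o ∈ ops, argOK Sig o) →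
    ValidFrom Sig st (compile ops) ∧ (List.foldl SLPStep st (compile ops)) 0 = evalOps ops (st 0) := by
  intro ops
  induction ops with
  | nil => intro st _ _; exact ⟨trivial, rfl⟩
  | cons o ops ih =>
      intro st hs ha
      have hsafe_tail : safe (dOp o (st 0)) ops := hs.2
      have hargs_tail : ∀ o' ∈ ops, argOK Sig o' := fun o' h => ha o' (List.mem_cons_of_mem _ h)
      have hco : compile (o :: ops) = compileOp o ++ compile ops := by
        simp [compile]
      -- effect of one op
      have step : ∀ o' : Op S, argOK Sig o' →
          (match o' with | .init _ => True | _ => st 0 ≠ none) →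
          ValidFrom Sig st (compileOp o') ∧
            (List.foldl SLPStep st (compileOp o')) 0 = dOp o' (st 0) := by
        intro o' harg hpre
        cases o' with
        | init s =>
            refine ⟨⟨harg, trivial⟩, ?_⟩
            show (Function.update st 0 (some s)) 0 = some s
            exact Function.update_self _ _ _
        | mulR s =>
            have h0 : st 0 ≠ none := hpre
            constructor
            · refine ⟨harg, ⟨?_, ?_⟩, trivial⟩
              · simpa [SLPStep, Function.update] using h0
              · simp [SLPStep, Function.update]
            · show (Function.update (Function.update st 1 (some s)) 0
                  (Option.map₂ (· * ·) ((Function.update st 1 (some s)) 0)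
                    ((Function.update st 1 (some s)) 1))) 0 = dOp (Op.mulR s) (st 0)
              rw [Function.update_self,
                Function.update_of_ne (show (0 : Fin 2) ≠ 1 by decide),
                Function.update_self]
              cases hx : st 0 with
              | none => rfl
              | some a => rfl
        | mulL s =>
            have h0 : st 0 ≠ none := hpre
            constructor
            · refine ⟨harg, ⟨?_, ?_⟩, trivial⟩
              · simp [SLPStep, Function.update]
              · simpa [SLPStep, Function.update] using h0
            · show (Function.update (Function.update st 1 (some s)) 0
                  (Option.map₂ (· * ·) ((Function.update st 1 (some s)) 1)
                    ((Function.update st 1 (some s)) 0))) 0 = dOp (Op.mulL s) (st 0)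
              rw [Function.update_self,
                Function.update_of_ne (show (0 : Fin 2) ≠ 1 by decide),
                Function.update_self]
              cases hx : st 0 with
              | none => rfl
              | some a => rfl
        | sq =>
            have h0 : st 0 ≠ none := hpre
            constructor
            · exact ⟨⟨h0, h0⟩, trivial⟩
            · show (Function.update st 0 (Option.map₂ (· * ·) (st 0) (st 0))) 0
                  = dOp Op.sq (st 0)
              rw [Function.update_self]
              cases hx : st 0 with
              | none => rfl
              | some a => rfl
      have hone := step o (ha o List.mem_cons_self) hs.1
      have hst0 : (List.foldl SLPStep st (compileOp o)) 0 = dOp o (st 0) := hone.2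
      have ihres := ih (List.foldl SLPStep st (compileOp o)) (hst0 ▸ hsafe_tail) hargs_tail
      rw [hco]
      constructor
      · rw [validFrom_append]
        exact ⟨hone.1, ihres.1⟩
      · rw [List.foldl_append]
        rw [ihres.2, hst0]
        rfl
end Ops

section Mid
variable {S : Type} [Semigroup S] [Fintype S]

noncomputable def wordE (E : S → ℕ) : List S :=
  Finset.univ.toList.flatMap (fun g => List.replicate (E g) g)

open Classical in
lemma count_wordE (E : S → ℕ) (g : S) : (wordE E).count g = E g := by
  classical
  unfold wordE
  rw [List.count_flatMap]
  have : (List.map (List.count g ∘ fun g' => List.replicate (E g') g') Finset.univ.toList)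
      = List.map (fun g' => if g' = g then E g' else 0) Finset.univ.toList := by
    apply List.map_congr_left
    intro g' _
    simp [List.count_replicate]
  rw [this, Finset.sum_map_toList]
  simp

lemma mem_wordE {E : S → ℕ} {g : S} : g ∈ wordE E ↔ E g ≠ 0 := by
  unfold wordE
  constructor
  · intro h
    obtain ⟨g', _, hg'⟩ := List.mem_flatMap.mp h
    obtain ⟨hn, rfl⟩ := List.mem_replicate.mp hg'
    exact hn
  · intro h
    exact List.mem_flatMap.mpr ⟨g, by simp [Finset.mem_toList], List.mem_replicate.mpr ⟨h, rfl⟩⟩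

lemma length_wordE (E : S → ℕ) : (wordE E).length = ∑ g, E g := by
  unfold wordE
  rw [List.length_flatMap]
  have : (List.map (fun a => (List.replicate (E a) a).length) Finset.univ.toList)
      = List.map E Finset.univ.toList := by
    apply List.map_congr_left
    intro g' _
    simp
  rw [this, Finset.sum_map_toList]

open Classical in
lemma perm_wordE_split {E H R : S → ℕ} (h : ∀ g, E g = H g + H g + R g) :
    (wordE E).Perm (wordE H ++ wordE H ++ wordE R) := by
  classical
  rw [List.perm_iff_count]
  intro g
  have hg := h g
  simp only [List.count_append, count_wordE]
  omega

open Classical in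
lemma perm_wordE_count (mid : List S) :
    (wordE (fun g => mid.count g)).Perm mid := by
  classical
  rw [List.perm_iff_count]
  intro g
  rw [count_wordE]

/-! word programs -/

def wordOps : List S → List (Op S)
  | [] => []
  | a :: l => Op.init a :: l.map Op.mulR

lemma evalOps_mapMulR (l : List S) (x : S) :
    evalOps (l.map Op.mulR) (some x) = some (listProd₁ x l) := by
  induction l generalizing x with
  | nil => rfl
  | cons b l ih => exact ih (x * b)

lemma evalOps_wordOps (a : S) (l : List S) :
    evalOps (wordOps (a :: l)) none = some (listProd₁ a l) :=
  evalOps_mapMulR l a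

lemma safe_mapMulR (l : List S) (x : S) : safe (some x) (l.map Op.mulR) := by
  induction l generalizing x with
  | nil => trivial
  | cons b l ih => exact ⟨by simp, ih (x * b)⟩

lemma safe_mapMulL (l : List S) (x : S) : safe (some x) (l.map Op.mulL) := by
  induction l generalizing x with
  | nil => trivial
  | cons b l ih => exact ⟨by simp, ih (b * x)⟩

lemma safe_wordOps (l : List S) (x : Option S) : safe x (wordOps l) := by
  cases l with
  | nil => trivial
  | cons a l => exact ⟨trivial, safe_mapMulR l a⟩

lemma evalOps_mapMulL_rev (B : List S) : ∀ (b x : S),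
    evalOps ((b :: B).reverse.map Op.mulL) (some x) = some (listProd₁ b B * x) := by
  induction B with
  | nil => intro b x; rfl
  | cons c B' ih =>
      intro b x
      have hrev : (b :: c :: B').reverse = (c :: B').reverse ++ [b] := by simp
      rw [hrev, List.map_append, evalOps_append, ih c x]
      show some (b * (listProd₁ c B' * x)) = some (listProd₁ b (c :: B') * x)
      rw [show listProd₁ b (c :: B') = listProd₁ (b * c) B' from rfl, lp_mul, mul_assoc]

lemma wordOps_length (l : List S) : (wordOps l).length = l.length := by
  cases l with
  | nil => rfl
  | cons a l => simp [wordOps]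

lemma wordOps_args {Sig : Set S} {l : List S} (h : ∀ x ∈ l, x ∈ Sig) :
    ∀ o ∈ wordOps l, argOK Sig o := by
  cases l with
  | nil => intro o ho; exact absurd ho (by simp [wordOps])
  | cons a l =>
      intro o ho
      rcases List.mem_cons.mp ho with rfl | ho'
      · exact h a (by simp)
      · obtain ⟨x, hx, rfl⟩ := List.mem_map.mp ho'
        exact h x (by simp [hx])

/-! binary length -/

def blen (n : ℕ) : ℕ := if n = 0 then 0 else Nat.log 2 n + 1

lemma blen_half (n : ℕ) (h : n ≠ 0) : blen n = blen (n / 2) + 1 := by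
  unfold blen
  rcases Nat.lt_or_ge n 2 with h2 | h2
  · interval_cases n
    · simp at h
    · norm_num
  · have hn2 : n / 2 ≠ 0 := by
      have := Nat.div_le_div_right (c := 2) h2
      omega
    rw [if_neg h, if_neg hn2, Nat.log_div_base]
    have hlog : 1 ≤ Nat.log 2 n := Nat.log_pos (by norm_num) h2
    omega

lemma pow_blen_le (n : ℕ) : 2 ^ blen n ≤ 2 * n + 1 := by
  unfold blen
  rcases eq_or_ne n 0 with rfl | h
  · simp
  · rw [if_neg h, pow_succ]
    have := Nat.pow_log_le_self 2 h
    omega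

/-! the binary middle program -/

noncomputable def midOps : ℕ → (S → ℕ) → List (Op S)
  | 0, _ => []
  | (fuel+1), E =>
      if ∑ g, E g = 0 then []
      else if ∑ g, (E g / 2) = 0 then wordOps (wordE E)
      else midOps fuel (fun g => E g / 2) ++ (Op.sq :: (wordE (fun g => E g % 2)).map Op.mulR)

lemma sum_half_lt {E : S → ℕ} (h0 : (∑ g, E g) ≠ 0) :
    ∑ g, (E g / 2) < ∑ g, E g := by
  obtain ⟨g₀, _, hg₀⟩ := Finset.exists_ne_zero_of_sum_ne_zero h0
  exact Finset.sum_lt_sum (fun i _ => Nat.div_le_self _ _)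
    ⟨g₀, Finset.mem_univ _, Nat.div_lt_self (Nat.pos_of_ne_zero hg₀) one_lt_two⟩

lemma midOps_spec : ∀ (fuel : ℕ) (E : S → ℕ), ∑ g, E g ≤ fuel → (∑ g, E g) ≠ 0 →
    ∃ (aM : S) (wM : List S),
      (aM :: wM).Perm (wordE E) ∧
      safe none (midOps fuel E) ∧
      evalOps (midOps fuel E) none = some (listProd₁ aM wM) := by
  intro fuel
  induction fuel with
  | zero => intro E h h0; omega
  | succ fuel ih =>
      intro E hn h0
      simp only [midOps]
      rw [if_neg h0]
      by_cases h1 : ∑ g, (E g / 2) = 0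
      · rw [if_pos h1]
        cases hw : wordE E with
        | nil =>
            obtain ⟨g₀, _, hg₀⟩ := Finset.exists_ne_zero_of_sum_ne_zero h0
            have : g₀ ∈ wordE E := mem_wordE.mpr hg₀
            rw [hw] at this
            exact absurd this (by simp)
        | cons aM wM =>
            exact ⟨aM, wM, List.Perm.refl _, safe_wordOps _ _, evalOps_wordOps _ _⟩
      · rw [if_neg h1]
        have hlt : ∑ g, (E g / 2) ≤ fuel := by
          have := sum_half_lt h0
          omega
        obtain ⟨aH, wH, hperm, hsafe, heval⟩ := ih (fun g => E g / 2) hlt h1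
        set xH := listProd₁ aH wH with hxH
        refine ⟨aH, (wH ++ aH :: wH) ++ wordE (fun g => E g % 2), ?_, ?_, ?_⟩
        · -- permutation
          have heq : aH :: ((wH ++ aH :: wH) ++ wordE (fun g => E g % 2))
              = ((aH :: wH) ++ (aH :: wH)) ++ wordE (fun g => E g % 2) := by simp
          rw [heq]
          have p1 : (((aH :: wH) ++ (aH :: wH)) ++ wordE (fun g => E g % 2)).Perm
              ((wordE (fun g => E g / 2) ++ wordE (fun g => E g / 2))
                ++ wordE (fun g => E g % 2)) :=
            List.Perm.append (List.Perm.append hperm hperm) (List.Perm.refl _)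
          refine p1.trans ?_
          exact (perm_wordE_split (E := E) (H := fun g => E g / 2) (R := fun g => E g % 2)
            (fun g => by show E g = E g / 2 + E g / 2 + E g % 2; omega)).symm
        · -- safety
          rw [safe_append]
          refine ⟨hsafe, ?_⟩
          rw [heval]
          exact ⟨by simp, safe_mapMulR _ _⟩
        · -- evaluation
          rw [evalOps_append, heval]
          have : evalOps (Op.sq :: (wordE (fun g => E g % 2)).map Op.mulR) (some xH)
              = evalOps ((wordE (fun g => E g % 2)).map Op.mulR) (some (xH * xH)) := rfl
          rw [this, evalOps_mapMulR]
          congr 1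
          rw [hxH]
          rw [show listProd₁ aH wH * listProd₁ aH wH = listProd₁ aH (wH ++ aH :: wH) from
            (lp_append _ _ _ _).symm]
          rw [← lp_concat]

lemma midOps_args {Sig : Set S} : ∀ (fuel : ℕ) (E : S → ℕ),
    (∀ g, E g ≠ 0 → g ∈ Sig) → ∀ o ∈ midOps fuel E, argOK Sig o := by
  intro fuel
  induction fuel with
  | zero => intro E _ o ho; exact absurd ho (by simp [midOps])
  | succ fuel ih =>
      intro E hsupp
      simp only [midOps]
      by_cases h0 : ∑ g, E g = 0
      · rw [if_pos h0]; intro o ho; exact absurd ho (by simp)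
      rw [if_neg h0]
      by_cases h1 : ∑ g, (E g / 2) = 0
      · rw [if_pos h1]
        exact wordOps_args (fun x hx => hsupp x (mem_wordE.mp hx))
      · rw [if_neg h1]
        intro o ho
        rcases List.mem_append.mp ho with h | h
        · exact ih _ (fun g hg => hsupp g (by omega)) o h
        · rcases List.mem_cons.mp h with rfl | h'
          · trivial
          · obtain ⟨x, hx, rfl⟩ := List.mem_map.mp h'
            exact hsupp x (by have := mem_wordE.mp hx; omega)

lemma midOps_len : ∀ (fuel : ℕ) (E : S → ℕ),
    (midOps fuel E).length ≤ 2 * ∑ g, blen (E g) := by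
  intro fuel
  induction fuel with
  | zero => intro E; simp [midOps]
  | succ fuel ih =>
      intro E
      simp only [midOps]
      by_cases h0 : ∑ g, E g = 0
      · rw [if_pos h0]; simp
      rw [if_neg h0]
      by_cases h1 : ∑ g, (E g / 2) = 0
      · rw [if_pos h1]
        rw [wordOps_length, length_wordE]
        have hle1 : ∀ g, E g ≤ 1 := by
          intro g
          have := (Finset.sum_eq_zero_iff.mp h1) g (Finset.mem_univ g)
          omega
        rw [Finset.mul_sum]
        apply Finset.sum_le_sum
        intro g _
        have := hle1 g
        interval_cases h : E g
        · simp [blen]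
        · simp [blen]
      · rw [if_neg h1]
        have ihlen := ih (fun g => E g / 2)
        classical
        have hsum : ∑ g, blen (E g)
            = (∑ g, blen (E g / 2)) + ∑ g, (if E g = 0 then 0 else 1) := by
          rw [← Finset.sum_add_distrib]
          apply Finset.sum_congr rfl
          intro g _
          by_cases hg : E g = 0
          · simp [hg, blen]
          · rw [blen_half _ hg, if_neg hg]
        have hS1 : 1 ≤ ∑ g : S, (if E g = 0 then 0 else 1) := by
          obtain ⟨g₀, _, hg₀⟩ := Finset.exists_ne_zero_of_sum_ne_zero h0
          calc 1 = (if E g₀ = 0 then 0 else 1) := by rw [if_neg hg₀]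
            _ ≤ _ := Finset.single_le_sum (f := fun g => if E g = 0 then 0 else 1)
                (fun i _ => Nat.zero_le _) (Finset.mem_univ g₀)
        have hRp : (∑ g, E g % 2) ≤ ∑ g : S, (if E g = 0 then 0 else 1) := by
          apply Finset.sum_le_sum
          intro g _
          by_cases hg : E g = 0
          · simp [hg]
          · rw [if_neg hg]; omega
        have hlen_app : (midOps fuel (fun g => E g / 2)
            ++ (Op.sq :: (wordE (fun g => E g % 2)).map Op.mulR)).length
            = (midOps fuel (fun g => E g / 2)).length + 1 + ∑ g, E g % 2 := by
          simp [List.length_append, length_wordE]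
          omega
        rw [hlen_app, hsum]
        omega

end Mid


section Final
variable {S : Type} [Semigroup S] [Fintype S]

/-- prefix product with exponent vector -/
noncomputable def thetaW (a₀ : S) (A : List S) (f : S → ℕ) : S :=
  listProd₁ a₀ (A ++ wordE f)

/-- full sandwich product with exponent vector in the middle -/
noncomputable def phiW (a₀ : S) (A : List S) (b : S) (B : List S) (E : S → ℕ) : S :=
  listProd₁ a₀ (A ++ (wordE E ++ (b :: B)))

open Classical in
lemma perm_wordE_add {E F G : S → ℕ} (h : ∀ g, E g = F g + G g) :
    (wordE E).Perm (wordE F ++ wordE G) := by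
  classical
  rw [List.perm_iff_count]
  intro g
  have hg := h g
  simp only [List.count_append, count_wordE]
  omega

lemma replace_lemma {k : ℕ} (hk : 1 ≤ k)
    (hyp : ∀ u ∈ powSet S k, ∀ v ∈ powSet S k, ∀ x y : S, u * x * y * v = u * y * x * v)
    (a₀ : S) (A : List S) (b : S) (B : List S)
    (hA : k ≤ A.length + 1) (hB : k ≤ (b :: B).length)
    (Estar f f' : S → ℕ) (hf : ∀ g, f g ≤ Estar g)
    (hθ : thetaW a₀ A f = thetaW a₀ A f') :
    phiW a₀ A b B (fun g => Estar g - f g + f' g) = phiW a₀ A b B Estar := by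
  have hsplit1 : (wordE Estar).Perm (wordE f ++ wordE (fun g => Estar g - f g)) :=
    perm_wordE_add (fun g => by
      show Estar g = f g + (Estar g - f g)
      have := hf g; omega)
  have hsplit2 : (wordE (fun g => Estar g - f g + f' g)).Perm
      (wordE f' ++ wordE (fun g => Estar g - f g)) :=
    perm_wordE_add (fun g => by
      show Estar g - f g + f' g = f' g + (Estar g - f g)
      omega)
  have h1 : phiW a₀ A b B Estar
      = listProd₁ a₀ (A ++ ((wordE f ++ wordE (fun g => Estar g - f g)) ++ (b :: B))) :=
    perm_mid hk hyp hsplit1 a₀ A (b :: B) hA hB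
  have h2 : phiW a₀ A b B (fun g => Estar g - f g + f' g)
      = listProd₁ a₀ (A ++ ((wordE f' ++ wordE (fun g => Estar g - f g)) ++ (b :: B))) :=
    perm_mid hk hyp hsplit2 a₀ A (b :: B) hA hB
  have e1 : A ++ ((wordE f ++ wordE (fun g => Estar g - f g)) ++ (b :: B))
      = (A ++ wordE f) ++ (wordE (fun g => Estar g - f g) ++ (b :: B)) := by simp
  have e2 : A ++ ((wordE f' ++ wordE (fun g => Estar g - f g)) ++ (b :: B))
      = (A ++ wordE f') ++ (wordE (fun g => Estar g - f g) ++ (b :: B)) := by simp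
  rw [h1, h2, e1, e2,
    lp_concat (A ++ wordE f') ((wordE (fun g => Estar g - f g)) ++ (b :: B)) a₀,
    lp_concat (A ++ wordE f) ((wordE (fun g => Estar g - f g)) ++ (b :: B)) a₀]
  show listProd₁ (thetaW a₀ A f') _ = listProd₁ (thetaW a₀ A f) _
  rw [hθ]

lemma amgm_int (x y q : ℤ) (h : x + y = 2 * q) : x * y ≤ q * q := by
  have e : (x + y) ^ 2 = 4 * (q * q) := by rw [h]; ring
  have e2 : (x + y) ^ 2 - 4 * (x * y) = (x - y) ^ 2 := by ring
  have h2 := sq_nonneg (x - y)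
  linarith

lemma amgm_int_strict (x y q : ℤ) (h : x + y = 2 * q) (hne : x ≠ y) : x * y < q * q := by
  have h1 : x - y ≠ 0 := sub_ne_zero.mpr hne
  have e : (x + y) ^ 2 = 4 * (q * q) := by rw [h]; ring
  have e2 : (x + y) ^ 2 - 4 * (x * y) = (x - y) ^ 2 := by ring
  have h3 : 1 ≤ (x - y) ^ 2 := by
    rcases h1.lt_or_gt with h4 | h4
    · nlinarith
    · nlinarith
  linarith

lemma amgm_nat {a b m : ℕ} (h : a + b = 2 * m) : a * b ≤ m * m := by
  zify
  exact amgm_int a b m (by exact_mod_cast h)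

lemma amgm_nat_strict {a b m : ℕ} (h : a + b = 2 * m) (hne : a ≠ b) : a * b < m * m := by
  zify
  exact amgm_int_strict a b m (by exact_mod_cast h) (by exact_mod_cast hne)

lemma compileOp_len (o : Op S) : (compileOp o).length ≤ 2 := by
  cases o <;> simp [compileOp]

lemma compile_len (ops : List (Op S)) : (compile ops).length ≤ 2 * ops.length := by
  induction ops with
  | nil => simp [compile]
  | cons o ops ih =>
      have : compile (o :: ops) = compileOp o ++ compile ops := by simp [compile]
      rw [this, List.length_append]
      have := compileOp_len o
      simp only [List.length_cons]
      omega

end Final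

/-- a `k`-permutative finite semigroup admits straight-line programs of
width 2 and length `O(log |S|)`, with the constant depending only on `k`. -/
theorem permutative_width_two_log_length
    (k : ℕ) (hk : 1 ≤ k) :
    ∃ C : ℝ, 0 < C ∧
      ∀ (S : Type) [Semigroup S] [Fintype S],
        (∀ u ∈ powSet S k, ∀ v ∈ powSet S k, ∀ x y : S, u * x * y * v = u * y * x * v) →
        ∀ (Sig : Set S) (t : S), t ∈ Subsemigroup.closure Sig →
          ∃ P : List (SLPInstr S 2), SLPValid Sig P ∧ SLPComputes P t ∧
            (P.length : ℝ) ≤ C * (Real.logb 2 (Fintype.card S) + 1) := by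
  classical
  refine ⟨8 * k + 30, by positivity, ?_⟩
  intro S _ _ hyp Sig t ht
  haveI : Nonempty S := ⟨t⟩
  have hn1 : 1 ≤ Fintype.card S := Fintype.card_pos
  have hlogb0 : 0 ≤ Real.logb 2 (Fintype.card S) :=
    Real.logb_nonneg (by norm_num) (by exact_mod_cast hn1)
  -- main construction of an abstract op list
  have main : ∃ ops : List (Op S), safe none ops ∧ (∀ o ∈ ops, argOK Sig o) ∧
      evalOps ops none = some t ∧ ops.length ≤ 4 * Nat.log 2 (Fintype.card S) + 4 * k + 3 := by
    by_cases hshort : ∃ (a : S) (l : List S), a ∈ Sig ∧ (∀ x ∈ l, x ∈ Sig) ∧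
        listProd₁ a l = t ∧ l.length + 1 ≤ 2 * k + 1
    · obtain ⟨a, l, ha, hl, hval, hlen⟩ := hshort
      refine ⟨wordOps (a :: l), safe_wordOps _ _, ?_, ?_, ?_⟩
      · apply wordOps_args
        intro x hx
        rcases List.mem_cons.mp hx with rfl | hx'
        · exact ha
        · exact hl x hx'
      · rw [evalOps_wordOps, hval]
      · rw [wordOps_length]
        simp only [List.length_cons]
        omega
    · -- long case
      obtain ⟨a₀, l₀, ha₀, hl₀, hval₀⟩ := exists_word ht
      have hlong : 2 * k + 1 ≤ l₀.length := by
        by_contra hc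
        exact hshort ⟨a₀, l₀, ha₀, hl₀, hval₀, by omega⟩
      obtain ⟨kk, rfl⟩ : ∃ kk, k = kk + 1 := ⟨k - 1, by omega⟩
      set A := l₀.take kk with hA
      set rest := l₀.drop kk with hrest
      have hrestlen : rest.length = l₀.length - kk := by rw [hrest, List.length_drop]
      set j := rest.length - (kk + 1) with hj
      set mid := rest.take j with hmid
      have hAlen : A.length = kk := by
        rw [hA, List.length_take]
        omega
      have hvlen : (rest.drop j).length = kk + 1 := by
        rw [List.length_drop]
        omega
      cases hv : rest.drop j with
      | nil => rw [hv] at hvlen; simp at hvlen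
      | cons b B =>
      have hBlen : B.length + 1 = kk + 1 := by
        rw [hv] at hvlen
        simpa using hvlen
      have hsplit : l₀ = A ++ (mid ++ (b :: B)) := by
        rw [← hv, hmid, List.take_append_drop, hA, hrest, List.take_append_drop]
      -- supply of set membership
      have hmemA : ∀ x ∈ A, x ∈ Sig := fun x hx => hl₀ x (List.take_subset _ _ hx)
      have hmemMid : ∀ x ∈ mid, x ∈ Sig := fun x hx =>
        hl₀ x (List.drop_subset _ _ (List.take_subset _ _ hx))
      have hmemV : ∀ x ∈ b :: B, x ∈ Sig := fun x hx => by
        rw [← hv] at hx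
        exact hl₀ x (List.drop_subset _ _ (List.drop_subset _ _ hx))
      have hAk : kk + 1 ≤ A.length + 1 := by omega
      have hBk : kk + 1 ≤ (b :: B).length := by simp; omega
      -- the set of admissible exponent vectors
      set R : Set (S → ℕ) :=
        {E | (∀ g, E g ≠ 0 → g ∈ Sig) ∧ phiW a₀ A b B E = t} with hR
      have hE₀ : (fun g => mid.count g) ∈ R := by
        constructor
        · intro g hg
          exact hmemMid g (List.count_pos_iff.mp (Nat.pos_of_ne_zero hg))
        · show phiW a₀ A b B _ = t
          unfold phiW
          rw [perm_mid hk hyp (perm_wordE_count mid) a₀ A (b :: B) hAk hBk]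
          rw [← hval₀]
          congr 1
          exact hsplit.symm
      -- minimize total sum, then the product
      set M1 : Set ℕ := {m | ∃ E ∈ R, ∑ g, E g = m} with hM1
      have hM1ne : M1.Nonempty := ⟨_, _, hE₀, rfl⟩
      obtain ⟨E₁, hE₁R, hE₁sum⟩ := Nat.sInf_mem hM1ne
      set s₁ := sInf M1 with hs₁
      set M2 : Set ℕ := {m | ∃ E ∈ R, (∑ g, E g) = s₁ ∧ (∏ g, (E g + 1)) = m} with hM2
      have hM2ne : M2.Nonempty := ⟨_, E₁, hE₁R, hE₁sum, rfl⟩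
      obtain ⟨Es, hEsR, hEssum, hEsprod⟩ := Nat.sInf_mem hM2ne
      set s₂ := sInf M2 with hs₂
      -- injectivity of theta on the box below Es
      have hinj : ∀ f f' : S → ℕ, (∀ g, f g ≤ Es g) → (∀ g, f' g ≤ Es g) →
          thetaW a₀ A f = thetaW a₀ A f' → f = f' := by
        intro f f' hf hf' hθ
        by_contra hne
        have hE'R : (fun g => Es g - f g + f' g) ∈ R := by
          constructor
          · intro g hg
            have hg2 : Es g - f g + f' g ≠ 0 := hg
            apply hEsR.1 g
            have := hf' g
            omega
          · rw [replace_lemma hk hyp a₀ A b B hAk hBk Es f f' hf hθ]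
            exact hEsR.2
        have hE''R : (fun g => Es g - f' g + f g) ∈ R := by
          constructor
          · intro g hg
            have hg2 : Es g - f' g + f g ≠ 0 := hg
            apply hEsR.1 g
            have := hf g
            omega
          · rw [replace_lemma hk hyp a₀ A b B hAk hBk Es f' f hf' hθ.symm]
            exact hEsR.2
        have hsum' : (∑ g, (Es g - f g + f' g)) + (∑ g, f g)
            = (∑ g, Es g) + (∑ g, f' g) := by
          rw [← Finset.sum_add_distrib, ← Finset.sum_add_distrib]
          exact Finset.sum_congr rfl (fun g _ => by have := hf g; omega)
        have hsum'' : (∑ g, (Es g - f' g + f g)) + (∑ g, f' g)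
            = (∑ g, Es g) + (∑ g, f g) := by
          rw [← Finset.sum_add_distrib, ← Finset.sum_add_distrib]
          exact Finset.sum_congr rfl (fun g _ => by have := hf' g; omega)
        have hmin' : s₁ ≤ ∑ g, (Es g - f g + f' g) := Nat.sInf_le ⟨_, hE'R, rfl⟩
        have hmin'' : s₁ ≤ ∑ g, (Es g - f' g + f g) := Nat.sInf_le ⟨_, hE''R, rfl⟩
        rcases lt_trichotomy (∑ g, f g) (∑ g, f' g) with hc | hc | hc
        · omega
        · -- equal sums: product strictly decreases for one of them
          have hsumE' : (∑ g, (Es g - f g + f' g)) = s₁ := by omega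
          have hsumE'' : (∑ g, (Es g - f' g + f g)) = s₁ := by omega
          obtain ⟨g₀, hg₀⟩ := Function.ne_iff.mp hne
          have hpointwise : ∀ g, ((Es g - f g + f' g) + 1) * ((Es g - f' g + f g) + 1)
              ≤ (Es g + 1) * (Es g + 1) := by
            intro g
            apply amgm_nat
            have := hf g; have := hf' g
            omega
          have hstrict : ((Es g₀ - f g₀ + f' g₀) + 1) * ((Es g₀ - f' g₀ + f g₀) + 1)
              < (Es g₀ + 1) * (Es g₀ + 1) := by
            apply amgm_nat_strict
            · have := hf g₀; have := hf' g₀; omega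
            · have := hf g₀; have := hf' g₀; omega
          have hprodlt : (∏ g, ((Es g - f g + f' g) + 1)) * (∏ g, ((Es g - f' g + f g) + 1))
              < (∏ g, (Es g + 1)) * (∏ g, (Es g + 1)) := by
            rw [← Finset.prod_mul_distrib, ← Finset.prod_mul_distrib]
            apply Finset.prod_lt_prod
            · intro i _; positivity
            · intro i _; exact hpointwise i
            · exact ⟨g₀, Finset.mem_univ _, hstrict⟩
          have hm2' : s₂ ≤ ∏ g, ((Es g - f g + f' g) + 1) :=
            Nat.sInf_le ⟨_, hE'R, hsumE', rfl⟩
          have hm2'' : s₂ ≤ ∏ g, ((Es g - f' g + f g) + 1) :=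
            Nat.sInf_le ⟨_, hE''R, hsumE'', rfl⟩
          have : s₂ * s₂ < s₂ * s₂ := by
            calc s₂ * s₂ ≤ _ := Nat.mul_le_mul hm2' hm2''
              _ < (∏ g, (Es g + 1)) * (∏ g, (Es g + 1)) := hprodlt
              _ = s₂ * s₂ := by rw [hEsprod]
          omega
        · omega
      -- counting: the product is at most |S|
      have hcard : (∏ g, (Es g + 1)) ≤ Fintype.card S := by
        have hinj2 : Function.Injective
            (fun (bv : ∀ g : S, Fin (Es g + 1)) => thetaW a₀ A (fun g => (bv g : ℕ))) := by
          intro b1 b2 heq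
          have := hinj (fun g => (b1 g : ℕ)) (fun g => (b2 g : ℕ))
            (fun g => Nat.lt_succ_iff.mp (b1 g).isLt)
            (fun g => Nat.lt_succ_iff.mp (b2 g).isLt) heq
          funext g
          exact Fin.ext (congrFun this g)
        calc (∏ g, (Es g + 1)) = Fintype.card (∀ g : S, Fin (Es g + 1)) := by
              simp [Fintype.card_pi]
          _ ≤ Fintype.card S := Fintype.card_le_of_injective _ hinj2
      -- blen bound
      have hblen : ∑ g, blen (Es g) ≤ 2 * Nat.log 2 (Fintype.card S) + 1 := by
        have hpow : 2 ^ (∑ g, blen (Es g)) ≤ Fintype.card S * Fintype.card S := by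
          calc 2 ^ (∑ g, blen (Es g)) = ∏ g, 2 ^ blen (Es g) :=
                (Finset.prod_pow_eq_pow_sum _ _ _).symm
            _ ≤ ∏ g, ((Es g + 1) * (Es g + 1)) := by
                apply Finset.prod_le_prod (fun i _ => Nat.zero_le _)
                intro i _
                have := pow_blen_le (Es i)
                nlinarith
            _ = (∏ g, (Es g + 1)) * (∏ g, (Es g + 1)) := Finset.prod_mul_distrib
            _ ≤ Fintype.card S * Fintype.card S := Nat.mul_le_mul hcard hcard
        have hcardlt : Fintype.card S < 2 ^ (Nat.log 2 (Fintype.card S) + 1) :=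
          Nat.lt_pow_succ_log_self (by norm_num) _
        have h2 : 2 ^ (∑ g, blen (Es g)) < 2 ^ (2 * Nat.log 2 (Fintype.card S) + 2) := by
          calc 2 ^ (∑ g, blen (Es g)) ≤ Fintype.card S * Fintype.card S := hpow
            _ < 2 ^ (Nat.log 2 (Fintype.card S) + 1) * 2 ^ (Nat.log 2 (Fintype.card S) + 1) :=
              Nat.mul_lt_mul'' hcardlt hcardlt
            _ = 2 ^ (2 * Nat.log 2 (Fintype.card S) + 2) := by
              rw [← pow_add]
              congr 1
              omega
        have := (Nat.pow_lt_pow_iff_right (by norm_num : 1 < 2)).mp h2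
        omega
      -- now build the program
      by_cases hz : ∑ g, Es g = 0
      · -- impossible: would give a short word
        exfalso
        have hwe : wordE Es = [] := by
          rw [List.eq_nil_iff_forall_not_mem]
          intro x hx
          have := mem_wordE.mp hx
          have := (Finset.sum_eq_zero_iff.mp hz) x (Finset.mem_univ x)
          omega
        have hphi : phiW a₀ A b B Es = listProd₁ a₀ (A ++ (b :: B)) := by
          unfold phiW
          rw [hwe]
          simp
        apply hshort
        refine ⟨a₀, A ++ (b :: B), ha₀, ?_, ?_, ?_⟩
        · intro x hx
          rcases List.mem_append.mp hx with h | h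
          · exact hmemA x h
          · exact hmemV x h
        · rw [← hphi]; exact hEsR.2
        · rw [List.length_append]
          simp only [List.length_cons]
          omega
      · obtain ⟨aM, wM, hpermM, hsafeM, hevalM⟩ := midOps_spec (∑ g, Es g) Es le_rfl hz
        refine ⟨midOps (∑ g, Es g) Es ++ ((b :: B).map Op.mulR
            ++ ((a₀ :: A).reverse.map Op.mulL)), ?_, ?_, ?_, ?_⟩
        · -- safety
          rw [safe_append]
          refine ⟨hsafeM, ?_⟩
          rw [hevalM, safe_append]
          refine ⟨safe_mapMulR _ _, ?_⟩
          rw [evalOps_mapMulR]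
          exact safe_mapMulL _ _
        · -- args
          intro o ho
          rcases List.mem_append.mp ho with h | h
          · exact midOps_args _ Es hEsR.1 o h
          rcases List.mem_append.mp h with h | h
          · obtain ⟨x, hx, rfl⟩ := List.mem_map.mp h
            exact hmemV x hx
          · obtain ⟨x, hx, rfl⟩ := List.mem_map.mp h
            rw [List.mem_reverse] at hx
            rcases List.mem_cons.mp hx with rfl | hx'
            · exact ha₀
            · exact hmemA x hx'
        · -- evaluation
          rw [evalOps_append, hevalM, evalOps_append, evalOps_mapMulR,
            evalOps_mapMulL_rev]
          have hval : listProd₁ a₀ A * listProd₁ (listProd₁ aM wM) (b :: B) = t := by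
            rw [← lp_concat]
            rw [show listProd₁ a₀ A * listProd₁ aM (wM ++ b :: B)
              = listProd₁ a₀ (A ++ aM :: (wM ++ b :: B)) from (lp_append _ _ _ _).symm]
            rw [show A ++ aM :: (wM ++ b :: B) = A ++ ((aM :: wM) ++ (b :: B)) from by simp]
            rw [perm_mid hk hyp hpermM a₀ A (b :: B) hAk hBk]
            exact hEsR.2
          rw [hval]
        · -- length
          have h1 := midOps_len (∑ g, Es g) Es
          simp only [List.length_append, List.length_map, List.length_reverse,
            List.length_cons]
          have : B.length = kk := by omega
          omega
  -- package into an SLP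
  obtain ⟨ops, hsafe, hargs, heval, hlen⟩ := main
  obtain ⟨hvalid, hfold⟩ := compile_ok ops (fun _ => none) hsafe hargs
  refine ⟨compile ops, slpValid_of_validFrom hvalid, ?_, ?_⟩
  · refine ⟨List.foldl SLPStep (fun _ => none) (compile ops), ?_, 0, ?_⟩
    · unfold SLPStates
      exact foldl_mem_scanl _ _
    · rw [hfold, heval]
  · have hclen : (compile ops).length ≤ 8 * Nat.log 2 (Fintype.card S) + 8 * k + 6 := by
      have := compile_len ops
      omega
    have hcast : ((compile ops).length : ℝ)
        ≤ 8 * (Nat.log 2 (Fintype.card S) : ℝ) + (8 * k + 6) := by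
      exact_mod_cast hclen
    have hlog : (Nat.log 2 (Fintype.card S) : ℝ) ≤ Real.logb 2 (Fintype.card S) :=
      Real.natLog_le_logb _ _
    have hk' : (1 : ℝ) ≤ k := by exact_mod_cast hk
    calc ((compile ops).length : ℝ)
        ≤ 8 * (Nat.log 2 (Fintype.card S) : ℝ) + (8 * k + 6) := hcast
      _ ≤ 8 * Real.logb 2 (Fintype.card S) + (8 * k + 6) := by linarith
      _ ≤ (8 * k + 30) * (Real.logb 2 (Fintype.card S) + 1) := by nlinarith
end

section
/- Let G be a finite group, let n ≥ 1, and let g_1, …, g_n ∈ G with Σ = {g_1, …, g_n}. Then there exists a straight-line sequence over Σ, of length at most 5·(n + ⌈log₂|G|⌉ + 1), that computes the inverse g_i⁻¹ for every 1 ≤ i ≤ n (i.e. every g_i⁻¹ occurs in the sequence). -/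
namespace SLAux

variable {S : Type*} [Semigroup S] {Sig : Set S}

lemma append_single {L : List S} (hL : IsSLSeq Sig L) {z : S}
    (hz : z ∈ Sig ∨ ∃ x ∈ L, ∃ y ∈ L, z = x * y) : IsSLSeq Sig (L ++ [z]) := by
  intro m
  have hmlt : (m : ℕ) < L.length + 1 := by
    have := m.isLt; simpa using this
  rcases lt_or_ge (m : ℕ) L.length with hm | hm
  · have hget : (L ++ [z]).get m = L.get ⟨m, hm⟩ := by
      simp [List.get_eq_getElem, List.getElem_append_left hm]
    rcases hL ⟨m, hm⟩ with h | ⟨i, j, hi, hj, hij⟩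
    · left; rw [hget]; exact h
    · right
      refine ⟨⟨i, by simp⟩, ⟨j, by simp⟩, by simpa using hi, by simpa using hj, ?_⟩
      have gi : (L ++ [z]).get ⟨i, by simp⟩ = L.get i := by
        simp [List.get_eq_getElem, List.getElem_append_left i.isLt]
      have gj : (L ++ [z]).get ⟨j, by simp⟩ = L.get j := by
        simp [List.get_eq_getElem, List.getElem_append_left j.isLt]
      rw [hget, gi, gj]; exact hij
  · have hmeq : (m : ℕ) = L.length := by omega
    have hget : (L ++ [z]).get m = z := by
      simp [List.get_eq_getElem]
      exact List.getElem_concat_length hmeq _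
    rcases hz with h | ⟨x, hx, y, hy, hxy⟩
    · left; rw [hget]; exact h
    · right
      obtain ⟨i, hi⟩ := List.mem_iff_get.mp hx
      obtain ⟨j, hj⟩ := List.mem_iff_get.mp hy
      refine ⟨⟨i, by simp⟩, ⟨j, by simp⟩, by simpa [hmeq] using i.isLt,
        by simpa [hmeq] using j.isLt, ?_⟩
      have gi : (L ++ [z]).get ⟨i, by simp⟩ = L.get i := by
        simp [List.get_eq_getElem, List.getElem_append_left i.isLt]
      have gj : (L ++ [z]).get ⟨j, by simp⟩ = L.get j := by
        simp [List.get_eq_getElem, List.getElem_append_left j.isLt]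
      rw [hget, gi, gj, hi, hj]; exact hxy

lemma stage {L : List S} (hL : IsSLSeq Sig L) (f : ℕ → S) (k : ℕ)
    (h0 : f 0 ∈ L)
    (hstep : ∀ j < k, ∃ a ∈ L, f (j+1) = f j * a ∨ f (j+1) = a * f j) :
    ∃ L' : List S, IsSLSeq Sig L' ∧ (∀ x ∈ L, x ∈ L') ∧ (∀ j ≤ k, f j ∈ L') ∧
      L'.length ≤ L.length + k := by
  induction k with
  | zero =>
    exact ⟨L, hL, fun x h => h,
      fun j hj => by rw [Nat.le_zero.mp hj]; exact h0, le_rfl⟩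
  | succ k ih =>
    obtain ⟨L', h1, h2, h3, h4⟩ := ih (fun j hj => hstep j (by omega))
    obtain ⟨a, ha, hfa⟩ := hstep k (by omega)
    refine ⟨L' ++ [f (k+1)], ?_, ?_, ?_, ?_⟩
    · apply append_single h1
      right
      rcases hfa with h | h
      · exact ⟨f k, h3 k le_rfl, a, h2 a ha, h⟩
      · exact ⟨a, h2 a ha, f k, h3 k le_rfl, h⟩
    · intro x hx; exact List.mem_append_left _ (h2 x hx)
    · intro j hj
      rcases Nat.lt_or_ge j (k+1) with h | h
      · exact List.mem_append_left _ (h3 j (by omega))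
      · have : j = k+1 := by omega
        subst this; simp
    · simp; omega

lemma pow_chain {M : Type*} [Monoid M] {Sig : Set M} (h : M) :
    ∀ k, 1 ≤ k → ∀ L : List M, IsSLSeq Sig L → h ∈ L →
    ∃ L' : List M, IsSLSeq Sig L' ∧ (∀ x ∈ L, x ∈ L') ∧ h ^ k ∈ L' ∧
      L'.length ≤ L.length + 2 * Nat.log 2 k := by
  intro k
  induction k using Nat.strong_induction_on with
  | _ k ih =>
    intro hk L hL hh
    rcases eq_or_lt_of_le hk with h1 | h2
    · refine ⟨L, hL, fun x hx => hx, ?_, by omega⟩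
      rw [← h1]; simpa using hh
    · -- k ≥ 2
      set m := k / 2 with hm
      have hm1 : 1 ≤ m := by omega
      have hmk : m < k := by omega
      obtain ⟨L1, hL1, hsub1, hpm, hlen1⟩ := ih m hmk hm1 L hL hh
      have hlogm : Nat.log 2 m = Nat.log 2 k - 1 := Nat.log_div_base 2 k
      have hlogk : 1 ≤ Nat.log 2 k := Nat.log_pos (by norm_num) (by omega)
      have hsq : IsSLSeq Sig (L1 ++ [h ^ m * h ^ m]) :=
        append_single hL1 (Or.inr ⟨h ^ m, hpm, h ^ m, hpm, rfl⟩)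
      have hsqmem : h ^ (m + m) ∈ L1 ++ [h ^ m * h ^ m] := by
        rw [pow_add]; simp
      rcases Nat.even_or_odd k with he | ho
      · have : k = m + m := by
          obtain ⟨t, ht⟩ := he; omega
        refine ⟨L1 ++ [h ^ m * h ^ m], hsq,
          fun x hx => List.mem_append_left _ (hsub1 x hx), by rw [this]; exact hsqmem, ?_⟩
        simp; omega
      · have hkodd : k = m + m + 1 := by
          obtain ⟨t, ht⟩ := ho; omega
        have hh2 : h ∈ L1 ++ [h ^ m * h ^ m] := List.mem_append_left _ (hsub1 h hh)
        refine ⟨(L1 ++ [h ^ m * h ^ m]) ++ [h ^ (m + m) * h], ?_, ?_, ?_, ?_⟩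
        · exact append_single hsq (Or.inr ⟨h ^ (m+m), hsqmem, h, hh2, rfl⟩)
        · intro x hx
          exact List.mem_append_left _ (List.mem_append_left _ (hsub1 x hx))
        · rw [hkodd, pow_succ]; simp
        · simp; omega

end SLAux

open SLAux

/-- in a finite group, the inverses of `n` given generators can all be
computed by a single straight-line sequence (multiplications only) of length at most
`5·(n + ⌈log₂|G|⌉ + 1)`. -/
theorem inverses_by_straight_line_sequence
    (G : Type*) [Group G] [Fintype G] (n : ℕ) (hn : 1 ≤ n) (g : Fin n → G) :
    ∃ L : List G, IsSLSeq (Set.range g) L ∧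
      (∀ i : Fin n, (g i)⁻¹ ∈ L) ∧
      L.length ≤ 5 * (n + Nat.clog 2 (Fintype.card G) + 1) := by
  classical
  set Sig : Set G := Set.range g with hSig
  set N := Fintype.card G with hNdef
  have hN1 : 1 ≤ N := Fintype.card_pos
  -- generator list
  set v : List G := List.ofFn g with hv
  have hvlen : v.length = n := by simp [hv]
  have hvget : ∀ (i : ℕ) (hi : i < n), v[i]'(by omega) = g ⟨i, hi⟩ := by
    intro i hi; simp [hv]
  have hL0 : IsSLSeq Sig v := by
    intro m
    left
    rw [hSig]
    exact (List.mem_ofFn (f := g)).mp (List.get_mem v ⟨m.1, m.2⟩)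
  rcases eq_or_lt_of_le hN1 with hN | hN
  · -- trivial group
    have hsub : Subsingleton G := by
      rw [← Fintype.card_le_one_iff_subsingleton]; omega
    refine ⟨v, hL0, ?_, ?_⟩
    · intro i
      have : (g i)⁻¹ = g i := Subsingleton.elim _ _
      rw [this]
      exact (List.mem_ofFn (f := g)).mpr (Set.mem_range_self _)
    · rw [hvlen]; nlinarith [Nat.zero_le (Nat.clog 2 N)]
  · -- N ≥ 2
    set p : ℕ → G := fun k => (v.take k).prod with hp
    set s : ℕ → G := fun k => (v.drop k).prod with hs
    set h : G := v.prod with hhdef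
    have hpstep : ∀ i (hi : i < n), p (i+1) = p i * g ⟨i, hi⟩ := by
      intro i hi
      have := List.prod_take_succ v i (by omega)
      rw [hp]; simp only []
      rw [this, hvget i hi]
    have hsstep : ∀ i (hi : i < n), s i = g ⟨i, hi⟩ * s (i+1) := by
      intro i hi
      rw [hs]; simp only []
      rw [List.drop_eq_getElem_cons (by omega : i < v.length), List.prod_cons, hvget i hi]
    have hp0 : p 0 = 1 := by simp [hp]
    have hsn : s n = 1 := by
      have hd : v.drop n = [] := by rw [← hvlen]; exact List.drop_length
      rw [hs]; simp only []; rw [hd]; simp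
    have hpn : p n = h := by
      have ht : v.take n = v := by rw [← hvlen]; exact List.take_length
      rw [hp, hhdef]; simp only []; rw [ht]
    have hsplit : ∀ i : Fin n, h = p i * (g i * s (i+1)) := by
      intro i
      have h1 : v = v.take i ++ v.drop i := (List.take_append_drop i v).symm
      have h2 : (v.drop (i:ℕ)).prod = g i * s ((i:ℕ)+1) := by
        rw [List.drop_eq_getElem_cons (by omega : (i:ℕ) < v.length), List.prod_cons,
          hvget i i.isLt]
      calc h = (v.take i ++ v.drop i).prod := by rw [← h1]
        _ = p i * (v.drop (i:ℕ)).prod := by rw [List.prod_append]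
        _ = p i * (g i * s ((i:ℕ)+1)) := by rw [h2]
    -- Stage 1: prefixes
    obtain ⟨L1, hL1, hsub1, hmem1, hlen1⟩ :=
      stage hL0 (fun j => p (j+1)) (n-1)
        (by
          show p 1 ∈ v
          have : p 1 = g ⟨0, hn⟩ := by rw [hpstep 0 (by omega), hp0, one_mul]
          rw [this, hv, List.mem_ofFn]; exact ⟨_, rfl⟩)
        (by
          intro j hj
          refine ⟨g ⟨j+1, by omega⟩, ?_, Or.inl (hpstep (j+1) (by omega))⟩
          exact (List.mem_ofFn (f := g)).mpr (Set.mem_range_self _))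
    -- Stage 2: suffixes
    obtain ⟨L2, hL2, hsub2, hmem2, hlen2⟩ :=
      stage hL1 (fun j => s (n-1-j)) (n-1)
        (by
          show s (n-1-0) ∈ L1
          have : s (n-1) = g ⟨n-1, by omega⟩ := by
            rw [hsstep (n-1) (by omega)]
            have : n - 1 + 1 = n := by omega
            rw [this, hsn, mul_one]
          simp only [Nat.sub_zero]
          rw [this]
          exact hsub1 _ ((List.mem_ofFn (f := g)).mpr (Set.mem_range_self _)))
        (by
          intro j hj
          have he : n - 1 - (j+1) = n - 2 - j := by omega
          have hi : n - 2 - j < n := by omega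
          refine ⟨g ⟨n-2-j, hi⟩, ?_, Or.inr ?_⟩
          · apply hsub1; exact (List.mem_ofFn (f := g)).mpr (Set.mem_range_self _)
          · show s (n-1-(j+1)) = g ⟨n-2-j, hi⟩ * s (n-1-j)
            rw [he, hsstep (n-2-j) hi]
            have : n - 2 - j + 1 = n - 1 - j := by omega
            rw [this])
    -- Stage 3: power chain for h^(N-1)
    have hhL2 : h ∈ L2 := by
      rw [← hpn]
      apply hsub2
      have := hmem1 (n-1) le_rfl
      simpa [Nat.sub_add_cancel hn] using this
    obtain ⟨L3, hL3, hsub3, hemem, hlen3⟩ :=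
      pow_chain h (N-1) (by omega) L2 hL2 hhL2
    set e : G := h ^ (N-1) with he
    have heinv : e = h⁻¹ := by
      have h1 : h * e = 1 := by
        rw [he, ← pow_succ']
        have : N - 1 + 1 = N := by omega
        rw [this, hNdef]
        exact pow_card_eq_one
      exact (inv_eq_of_mul_eq_one_right h1).symm
    -- Stage 4: the unit
    set L4 : List G := L3 ++ [h * e] with hL4def
    have hL4 : IsSLSeq Sig L4 :=
      append_single hL3 (Or.inr ⟨h, hsub3 h hhL2, e, hemem, rfl⟩)
    have hone : (1 : G) ∈ L4 := by
      have : h * e = 1 := by rw [heinv]; simp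
      rw [← this, hL4def]; simp
    have hsub4 : ∀ x ∈ L3, x ∈ L4 := fun x hx => List.mem_append_left _ hx
    have hpmem : ∀ i ≤ n, p i ∈ L4 := by
      intro i hi
      rcases Nat.eq_zero_or_pos i with h0 | h0
      · rw [h0, hp0]; exact hone
      · apply hsub4; apply hsub3; apply hsub2
        have := hmem1 (i-1) (by omega)
        simpa [Nat.sub_add_cancel h0] using this
    have hsmem : ∀ i, 1 ≤ i → i ≤ n → s i ∈ L4 := by
      intro i h1 h2
      rcases eq_or_lt_of_le h2 with h3 | h3
      · rw [h3, hsn]; exact hone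
      · apply hsub4; apply hsub3
        have := hmem2 (n-1-i) (by omega)
        have heq : n - 1 - (n-1-i) = i := by omega
        rw [heq] at this
        exact this
    have hemem4 : e ∈ L4 := hsub4 _ hemem
    -- Key identity
    have hkey : ∀ i : Fin n, (g i)⁻¹ = s ((i:ℕ)+1) * (e * p i) := by
      intro i
      rw [heinv, hsplit i]
      group
    -- Stage 5: final products, by induction
    have hfinal : ∀ m ≤ n, ∃ L' : List G, IsSLSeq Sig L' ∧
        (∀ i : Fin n, (i:ℕ) < m → (g i)⁻¹ ∈ L') ∧
        L'.length ≤ L4.length + 2 * m ∧ (∀ x ∈ L4, x ∈ L') := by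
      intro m
      induction m with
      | zero => exact fun _ => ⟨L4, hL4, fun i hi => by omega, by omega, fun x hx => hx⟩
      | succ m ih =>
        intro hm
        obtain ⟨L', h1, h2, h3, h4⟩ := ih (by omega)
        have hpm : p m ∈ L' := h4 _ (hpmem m (by omega))
        have hsm : s (m+1) ∈ L' := h4 _ (hsmem (m+1) (by omega) (by omega))
        have hem : e ∈ L' := h4 _ hemem4
        have hx : IsSLSeq Sig (L' ++ [e * p m]) :=
          append_single h1 (Or.inr ⟨e, hem, p m, hpm, rfl⟩)
        have hxmem : e * p m ∈ L' ++ [e * p m] := by simp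
        have hsm' : s (m+1) ∈ L' ++ [e * p m] := List.mem_append_left _ hsm
        refine ⟨(L' ++ [e * p m]) ++ [s (m+1) * (e * p m)], ?_, ?_, ?_, ?_⟩
        · exact append_single hx (Or.inr ⟨s (m+1), hsm', e * p m, hxmem, rfl⟩)
        · intro i hi
          rcases Nat.lt_or_ge (i:ℕ) m with h | h
          · exact List.mem_append_left _ (List.mem_append_left _ (h2 i h))
          · have him : (i:ℕ) = m := by omega
            have := hkey i
            rw [him] at this
            rw [this]
            simp
        · simp; omega
        · intro x hx
          exact List.mem_append_left _ (List.mem_append_left _ (h4 x hx))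
    obtain ⟨L5, hL5, hinv, hlen5, _⟩ := hfinal n le_rfl
    refine ⟨L5, hL5, fun i => hinv i i.isLt, ?_⟩
    -- length bound
    have hlog : Nat.log 2 (N-1) ≤ Nat.clog 2 N :=
      le_trans (Nat.log_mono_right (by omega)) (Nat.log_le_clog 2 N)
    have hL4len : L4.length = L3.length + 1 := by simp [hL4def]
    have : L5.length ≤ n + (n-1) + (n-1) + 2 * Nat.log 2 (N-1) + 1 + 2 * n := by
      rw [hvlen] at hlen1
      omega
    calc L5.length ≤ n + (n-1) + (n-1) + 2 * Nat.log 2 (N-1) + 1 + 2 * n := this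
      _ ≤ 5 * (n + Nat.clog 2 N + 1) := by omega
end

section
/- Let G be a finite group, let n ≥ 1, and let G = G_0 ⊵ G_1 ⊵ … ⊵ G_n = {1} be a subnormal series (each G_i is a normal subgroup of G_{i−1}). Let Σ ⊆ G be such that for every 1 ≤ i ≤ n the set Σ ∩ G_{i−1} generates the group G_{i−1}. For each i let π_i : G_{i−1} → G_{i−1}/G_i be the quotient homomorphism, and suppose c_i ≥ 1 is such that every element of the quotient group G_{i−1}/G_i is computed by some straight-line sequence over π_i(Σ ∩ G_{i−1}) of length at most c_i. Then every t ∈ G is computed by a straight-line sequence over Σ of length at most c_1 + c_2 + … + c_n + n − 1. -/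
/-- The semigroup structure underlying a group structure. -/
def semigroupOfGroup {α : Type*} (g : Group α) : Semigroup α := letI := g; inferInstance

/-!
Lifting a straight-line sequence along the quotient map `G₀ → G₀/G₁` entry by entry gives a
sequence over `Σ` of the same length that computes some `g` with `g⁻¹ t ∈ G₁`. Computing
`g⁻¹ t` inside `G₁` by recursion along the series and appending the single product
`g · (g⁻¹ t) = t` costs one extra entry at each level but the last, where `Gₙ = 1` forces
`g = t`.
-/

namespace IsSLSeq

variable {S T : Type*} [Semigroup S] [Semigroup T] {Sig : Set S} {L L' : List S} {a : S}

theorem nil : IsSLSeq Sig ([] : List S) := fun m => m.elim0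

theorem iff_mem_take : IsSLSeq Sig L ↔ ∀ m (hm : m < L.length),
    L[m] ∈ Sig ∨ ∃ x ∈ L.take m, ∃ y ∈ L.take m, L[m] = x * y := by
  simp only [IsSLSeq, Fin.forall_iff, Fin.exists_iff, List.get_eq_getElem,
    List.mem_take_iff_getElem, lt_min_iff]
  refine forall₂_congr fun m hm => or_congr_right ⟨?_, ?_⟩
  · rintro ⟨i, hi, j, hj, him, hjm, h⟩
    exact ⟨_, ⟨i, ⟨him, hi⟩, rfl⟩, _, ⟨j, ⟨hjm, hj⟩, rfl⟩, h⟩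
  · rintro ⟨_, ⟨i, ⟨him, hi⟩, rfl⟩, _, ⟨j, ⟨hjm, hj⟩, rfl⟩, h⟩
    exact ⟨i, hi, j, hj, him, hjm, h⟩

theorem concat_iff :
    IsSLSeq Sig (L ++ [a]) ↔ IsSLSeq Sig L ∧ (a ∈ Sig ∨ ∃ x ∈ L, ∃ y ∈ L, a = x * y) := by
  have hlast : (L ++ [a])[L.length]'(by simp) = a := by simp
  have hprefix : ∀ m (hm : m < L.length),
      (L ++ [a])[m]'(by simp; omega) = L[m] ∧ (L ++ [a]).take m = L.take m :=
    fun m hm => ⟨List.getElem_append_left hm, List.take_append_of_le_length hm.le⟩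
  simp only [iff_mem_take, List.length_append, List.length_singleton]
  constructor
  · intro h
    refine ⟨fun m hm => ?_, ?_⟩
    · simpa only [hprefix m hm] using h m (by omega)
    · simpa only [hlast, List.take_left'] using h L.length (by omega)
  · rintro ⟨hL, ha⟩ m hm
    obtain hm | rfl : m < L.length ∨ m = L.length := by omega
    · simpa only [hprefix m hm] using hL m hm
    · simpa only [hlast, List.take_left'] using ha

theorem concat_mul {x y : S} (h : IsSLSeq Sig L) (hx : x ∈ L) (hy : y ∈ L) :
    IsSLSeq Sig (L ++ [x * y]) :=
  concat_iff.2 ⟨h, .inr ⟨x, hx, y, hy, rfl⟩⟩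

theorem append (h : IsSLSeq Sig L) (h' : IsSLSeq Sig L') : IsSLSeq Sig (L ++ L') := by
  induction L' using List.reverseRecOn with
  | nil => simpa
  | append_singleton L' b ih =>
    obtain ⟨hL', hb⟩ := concat_iff.1 h'
    rw [← List.append_assoc, concat_iff]
    refine ⟨ih hL', hb.imp_right ?_⟩
    rintro ⟨x, hx, y, hy, rfl⟩
    exact ⟨x, List.mem_append_right L hx, y, List.mem_append_right L hy, rfl⟩

theorem map (f : S →ₙ* T) {Sig' : Set T} (hf : Set.MapsTo f Sig Sig') (h : IsSLSeq Sig L) :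
    IsSLSeq Sig' (L.map f) := by
  induction L using List.reverseRecOn with
  | nil => exact nil
  | append_singleton L b ih =>
    obtain ⟨hL, hb⟩ := concat_iff.1 h
    rw [List.map_append, List.map_singleton, concat_iff]
    refine ⟨ih hL, hb.imp (fun hb => hf hb) ?_⟩
    rintro ⟨x, hx, y, hy, rfl⟩
    exact ⟨f x, List.mem_map_of_mem hx, f y, List.mem_map_of_mem hy, map_mul f x y⟩

theorem exists_map_eq (f : S →ₙ* T) {Sig' : Set T} (hf : Sig' ⊆ f '' Sig) {Lq : List T}
    (h : IsSLSeq Sig' Lq) : ∃ L : List S, IsSLSeq Sig L ∧ L.map f = Lq := by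
  induction Lq using List.reverseRecOn with
  | nil => exact ⟨[], nil, rfl⟩
  | append_singleton Lq b ih =>
    obtain ⟨hLq, hb⟩ := concat_iff.1 h
    obtain ⟨L, hL, rfl⟩ := ih hLq
    rcases hb with hb | ⟨_, hx, _, hy, rfl⟩
    · obtain ⟨s, hs, rfl⟩ := hf hb
      exact ⟨L ++ [s], concat_iff.2 ⟨hL, .inl hs⟩, by simp⟩
    · obtain ⟨x, hxL, rfl⟩ := List.mem_map.1 hx
      obtain ⟨y, hyL, rfl⟩ := List.mem_map.1 hy
      exact ⟨L ++ [x * y], hL.concat_mul hxL hyL, by simp⟩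

end IsSLSeq

def SLComputesWithin {S : Type*} [Semigroup S] (Sig : Set S) (t : S) (k : ℕ) : Prop :=
  ∃ L : List S, IsSLSeq Sig L ∧ t ∈ L ∧ L.length ≤ k

namespace SLComputesWithin

variable {S T : Type*} [Semigroup S] [Semigroup T] {Sig : Set S} {a b : S} {k l : ℕ}

theorem mul (ha : SLComputesWithin Sig a k) (hb : SLComputesWithin Sig b l) :
    SLComputesWithin Sig (a * b) (k + l + 1) := by
  obtain ⟨La, hLa, ha, hka⟩ := ha
  obtain ⟨Lb, hLb, hb, hlb⟩ := hb
  refine ⟨La ++ Lb ++ [a * b],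
    (hLa.append hLb).concat_mul (List.mem_append_left Lb ha) (List.mem_append_right La hb),
    by simp, ?_⟩
  simp only [List.length_append, List.length_singleton]
  omega

theorem map (f : S →ₙ* T) {Sig' : Set T} (hf : Set.MapsTo f Sig Sig')
    (h : SLComputesWithin Sig a k) : SLComputesWithin Sig' (f a) k := by
  obtain ⟨L, hL, ha, hk⟩ := h
  exact ⟨L.map f, hL.map f hf, List.mem_map_of_mem ha, by simpa⟩

theorem exists_lift (f : S →ₙ* T) {Sig' : Set T} (hf : Sig' ⊆ f '' Sig) {t : T}
    (h : SLComputesWithin Sig' t k) : ∃ s, f s = t ∧ SLComputesWithin Sig s k := by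
  obtain ⟨Lq, hLq, ht, hk⟩ := h
  obtain ⟨L, hL, rfl⟩ := hLq.exists_map_eq f hf
  obtain ⟨s, hs, rfl⟩ := List.mem_map.1 ht
  exact ⟨s, rfl, L, hL, hs, by simpa using hk⟩

end SLComputesWithin

section Subnormal

variable {G : Type*} [Group G] {Sig : Set G}

theorem exists_slComputesWithin_inv_mul_mem {A B : Subgroup G} [(B.subgroupOf A).Normal]
    {t : G} (ht : t ∈ A) {k : ℕ}
    (h : SLComputesWithin (QuotientGroup.mk '' (((↑) : A → G) ⁻¹' Sig) : Set (A ⧸ B.subgroupOf A))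
      (QuotientGroup.mk ⟨t, ht⟩) k) :
    ∃ g, SLComputesWithin Sig g k ∧ g⁻¹ * t ∈ B := by
  obtain ⟨s, hs, hsk⟩ := h.exists_lift (QuotientGroup.mk' _).toMulHom subset_rfl
  refine ⟨s, hsk.map A.subtype.toMulHom fun _ hx => hx, ?_⟩
  simpa [Subgroup.mem_subgroupOf] using QuotientGroup.eq.1 hs

theorem slComputesWithin_of_subnormal (n : ℕ) (H : Fin (n + 2) → Subgroup G)
    (hBot : H (Fin.last _) = ⊥)
    [hnorm : ∀ i : Fin (n + 1), ((H i.succ).subgroupOf (H i.castSucc)).Normal]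
    (c : Fin (n + 1) → ℕ)
    (hquot : ∀ i (q : H i.castSucc ⧸ (H i.succ).subgroupOf (H i.castSucc)), SLComputesWithin
      (QuotientGroup.mk '' (((↑) : H i.castSucc → G) ⁻¹' Sig)) q (c i))
    {t : G} (ht : t ∈ H 0) : SLComputesWithin Sig t (∑ i, c i + n) := by
  induction n generalizing t with
  | zero =>
    obtain ⟨g, hg, hgt⟩ :=
      exists_slComputesWithin_inv_mul_mem (A := H (Fin.castSucc 0)) ht (hquot 0 _)
    rw [show (0 : Fin 1).succ = Fin.last 1 from rfl, hBot, Subgroup.mem_bot, inv_mul_eq_one] at hgt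
    simpa [← hgt] using hg
  | succ n ih =>
    obtain ⟨g, hg, hgt⟩ :=
      exists_slComputesWithin_inv_mul_mem (A := H (Fin.castSucc 0)) ht (hquot 0 _)
    have hrest := ih (fun i => H i.succ) hBot (hnorm := fun i => hnorm i.succ) (fun i => c i.succ)
      (fun i => hquot i.succ) hgt
    have hcost : c 0 + (∑ i : Fin (n + 1), c i.succ + n) + 1 = ∑ i, c i + (n + 1) := by
      rw [Fin.sum_univ_succ (f := c)]; ring
    simpa only [mul_inv_cancel_left, hcost] using hg.mul hrest

end Subnormal

theorem adapted_generating_set_subnormal_series_cost_general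
    (G : Type*) [Group G] (n : ℕ) (hn : 1 ≤ n)
    (H : Fin (n + 1) → Subgroup G) (hTop : H 0 = ⊤) (hBot : H (Fin.last n) = ⊥)
    (hnorm : ∀ i : Fin n, ((H i.succ).subgroupOf (H i.castSucc)).Normal)
    (Sig : Set G)
    (c : Fin n → ℕ)
    (hquot : ∀ i : Fin n,
      ∀ q : (H i.castSucc) ⧸ (H i.succ).subgroupOf (H i.castSucc),
        ∃ L : List ((H i.castSucc) ⧸ (H i.succ).subgroupOf (H i.castSucc)),
          @IsSLSeq _ (semigroupOfGroup (@QuotientGroup.Quotient.group _ _ _ (hnorm i)))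
            { x | ∃ g : (H i.castSucc), (g : G) ∈ Sig ∧ QuotientGroup.mk g = x } L ∧
          q ∈ L ∧ L.length ≤ c i)
    (t : G) :
    ∃ L : List G, IsSLSeq Sig L ∧ t ∈ L ∧ L.length ≤ (∑ i, c i) + n - 1 := by
  obtain ⟨m, rfl⟩ : ∃ m, n = m + 1 := ⟨n - 1, by omega⟩
  have ht : t ∈ H 0 := hTop ▸ Subgroup.mem_top t
  rw [← add_assoc, Nat.add_sub_cancel]
  -- `hquot` fits up to unfolding `semigroupOfGroup` and `Set.image`.
  exact slComputesWithin_of_subnormal m H hBot c hquot ht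

/-- straight-line cost along a subnormal series with an adapted generating
set is dominated by the sum of the costs in the consecutive quotients. -/
theorem adapted_generating_set_subnormal_series_cost
    (G : Type*) [Group G] [Fintype G] (n : ℕ) (hn : 1 ≤ n)
    (H : Fin (n + 1) → Subgroup G) (hTop : H 0 = ⊤) (hBot : H (Fin.last n) = ⊥)
    (hle : ∀ i : Fin n, H i.succ ≤ H i.castSucc)
    (hnorm : ∀ i : Fin n, ((H i.succ).subgroupOf (H i.castSucc)).Normal)
    (Sig : Set G)
    (hgen : ∀ i : Fin n, Subgroup.closure (Sig ∩ (H i.castSucc : Set G)) = H i.castSucc)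
    (c : Fin n → ℕ) (hc : ∀ i, 1 ≤ c i)
    (hquot : ∀ i : Fin n,
      ∀ q : (H i.castSucc) ⧸ (H i.succ).subgroupOf (H i.castSucc),
        ∃ L : List ((H i.castSucc) ⧸ (H i.succ).subgroupOf (H i.castSucc)),
          @IsSLSeq _ (semigroupOfGroup (@QuotientGroup.Quotient.group _ _ _ (hnorm i)))
            { x | ∃ g : (H i.castSucc), (g : G) ∈ Sig ∧ QuotientGroup.mk g = x } L ∧
          q ∈ L ∧ L.length ≤ c i)
    (t : G) :
    ∃ L : List G, IsSLSeq Sig L ∧ t ∈ L ∧ L.length ≤ (∑ i, c i) + n - 1 :=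
  adapted_generating_set_subnormal_series_cost_general G n hn H hTop hBot hnorm Sig c hquot t
end

section
/- Let G be a group, let N be a normal subgroup of G, and let Δ ⊆ N. Write N' = ⁅N, N⁆ and N'' = ⁅N', N'⁆ for the first and second derived subgroups of N, ⟨Δ⟩ for the subgroup of G generated by Δ, ncl_G(X) for the normal closure in G of a subset X, and ⊔ for the join (supremum) of subgroups of G. Then: (i) if N = ⟨Δ⟩ ⊔ N'' then N' = ncl_G({⁅g, h⁆ : g, h ∈ Δ}) ⊔ N''; (ii) if N = ⟨Δ⟩ ⊔ N' then N = ncl_G(Δ) ⊔ N''; (iii) if N is solvable and N = ⟨Δ⟩ ⊔ N', then N = ncl_G(Δ). -/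
/-- The set of commutators `a⁻¹b⁻¹ab` with `a ∈ A`, `b ∈ B`. -/
def commSet {G : Type*} [Group G] (A B : Set G) : Set G :=
  { x | ∃ a ∈ A, ∃ b ∈ B, x = a⁻¹ * b⁻¹ * a * b }

/-- The derived subgroup `N' = ⁅N, N⁆` of a subgroup, generated by commutators. -/
def derivedOf {G : Type*} [Group G] (N : Subgroup G) : Subgroup G :=
  Subgroup.closure (commSet (N : Set G) (N : Set G))

open scoped commutatorElement

theorem derivedOf_eq {G : Type*} [Group G] (N : Subgroup G) : derivedOf N = ⁅N, N⁆ := by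
  apply le_antisymm
  · apply Subgroup.closure_le _ |>.mpr
    rintro x ⟨a, ha, b, hb, rfl⟩
    have : a⁻¹ * b⁻¹ * a * b = ⁅a⁻¹, b⁻¹⁆ := by
      simp [commutatorElement_def]
    rw [this]
    exact Subgroup.commutator_mem_commutator (inv_mem ha) (inv_mem hb)
  · apply Subgroup.commutator_le.mpr
    intro g₁ h₁ g₂ h₂
    apply Subgroup.subset_closure
    refine ⟨g₁⁻¹, inv_mem h₁, g₂⁻¹, inv_mem h₂, ?_⟩
    simp [commutatorElement_def]

/-- If the elements of `S` pairwise commute, the closure is abelian in the commutator sense. -/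
theorem commutator_closure_eq_bot {G : Type*} [Group G] {S : Set G}
    (h : ∀ a ∈ S, ∀ b ∈ S, Commute a b) :
    ⁅Subgroup.closure S, Subgroup.closure S⁆ = ⊥ := by
  rw [Subgroup.commutator_eq_bot_iff_le_centralizer]
  apply Subgroup.closure_le _ |>.mpr
  intro a ha
  rw [SetLike.mem_coe, Subgroup.mem_centralizer_iff]
  intro y hy
  induction hy using Subgroup.closure_induction with
  | mem x hx => exact (h a ha x hx).symm
  | one => simp
  | mul x y _ _ hx hy => rw [mul_assoc, hy, ← mul_assoc, hx, mul_assoc]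
  | inv x _ hx => exact (Commute.inv_left hx : Commute x⁻¹ a)

/-- (i) if `N = ⟨Δ⟩ ⊔ N''` then `N' = ncl(⁅Δ,Δ⁆) ⊔ N''`;
(ii) if `N = ⟨Δ⟩ ⊔ N'` then `N = ncl(Δ) ⊔ N''`;
(iii) if `N` is solvable and `N = ⟨Δ⟩ ⊔ N'` then `N = ncl(Δ)`. -/
theorem normal_subgroup_derived_series_generation
    (G : Type*) [Group G] (N : Subgroup G) (hN : N.Normal) (Δ : Set G) (hΔ : Δ ⊆ (N : Set G)) :
    ((N = Subgroup.closure Δ ⊔ derivedOf (derivedOf N)) →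
      derivedOf N = Subgroup.normalClosure (commSet Δ Δ) ⊔ derivedOf (derivedOf N)) ∧
    ((N = Subgroup.closure Δ ⊔ derivedOf N) →
      N = Subgroup.normalClosure Δ ⊔ derivedOf (derivedOf N)) ∧
    (IsSolvable N → (N = Subgroup.closure Δ ⊔ derivedOf N) →
      N = Subgroup.normalClosure Δ) := by
  haveI := hN
  simp only [derivedOf_eq]
  set N' := ⁅N, N⁆ with hN'def
  set N'' := ⁅N', N'⁆ with hN''def
  haveI hN' : N'.Normal := Subgroup.commutator_normal N N
  haveI hN'' : N''.Normal := Subgroup.commutator_normal N' N'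
  have hN'leN : N' ≤ N := Subgroup.commutator_le_right N N
  have hN''leN' : N'' ≤ N' := Subgroup.commutator_le_right N' N'
  have hcommsub : commSet Δ Δ ⊆ (N' : Set G) := by
    rintro x ⟨a, ha, b, hb, rfl⟩
    have : a⁻¹ * b⁻¹ * a * b = ⁅a⁻¹, b⁻¹⁆ := by simp [commutatorElement_def]
    rw [this]
    exact Subgroup.commutator_mem_commutator (inv_mem (hΔ ha)) (inv_mem (hΔ hb))
  refine ⟨?_, ?_, ?_⟩
  · -- (i)
    intro hgen
    set M := Subgroup.normalClosure (commSet Δ Δ) ⊔ N'' with hMdef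
    haveI hMnormal : M.Normal := Subgroup.sup_normal _ _
    apply le_antisymm
    · -- N' ≤ M
      set φ := QuotientGroup.mk' M
      have hker : φ.ker = M := QuotientGroup.ker_mk' M
      have key : Subgroup.map φ N' = ⊥ := by
        have hN''bot : Subgroup.map φ N'' = ⊥ := by
          rw [Subgroup.map_eq_bot_iff, hker]; exact le_sup_right
        have hmapN : Subgroup.map φ N = Subgroup.closure (φ '' Δ) := by
          rw [hgen, Subgroup.map_sup, hN''bot, sup_bot_eq, MonoidHom.map_closure]
        rw [hN'def, Subgroup.map_commutator, hmapN]
        apply commutator_closure_eq_bot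
        rintro _ ⟨a, ha, rfl⟩ _ ⟨b, hb, rfl⟩
        have : a⁻¹ * b⁻¹ * a * b ∈ M :=
          le_sup_left (α := Subgroup G)
            (Subgroup.subset_normalClosure ⟨a, ha, b, hb, rfl⟩)
        rw [← hker] at this
        have h1 : φ (a⁻¹ * b⁻¹ * a * b) = 1 := this
        have : ⁅(φ a)⁻¹, (φ b)⁻¹⁆ = 1 := by
          rw [← map_inv, ← map_inv, ← map_commutatorElement]
          simpa [commutatorElement_def, mul_assoc] using h1
        have hc : Commute (φ a)⁻¹ (φ b)⁻¹ := commutatorElement_eq_one_iff_commute.mp this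
        simpa using hc.inv_inv
      rw [Subgroup.map_eq_bot_iff, hker] at key
      exact key
    · -- M ≤ N'
      exact sup_le (Subgroup.normalClosure_le_normal hcommsub) hN''leN'
  · -- (ii)
    intro hgen
    set M := Subgroup.normalClosure Δ ⊔ N'' with hMdef
    haveI hMnormal : M.Normal := Subgroup.sup_normal _ _
    apply le_antisymm
    · set φ := QuotientGroup.mk' M
      have hker : φ.ker = M := QuotientGroup.ker_mk' M
      have hclbot : Subgroup.map φ (Subgroup.closure Δ) = ⊥ := by
        rw [Subgroup.map_eq_bot_iff, hker]
        exact le_trans Subgroup.closure_le_normalClosure le_sup_left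
      have hN''bot : Subgroup.map φ N'' = ⊥ := by
        rw [Subgroup.map_eq_bot_iff, hker]; exact le_sup_right
      have hmapN : Subgroup.map φ N = Subgroup.map φ N' := by
        rw [hgen, Subgroup.map_sup, hclbot, bot_sup_eq]
      have key : Subgroup.map φ N = ⊥ := by
        rw [hmapN, hN'def, Subgroup.map_commutator, hmapN,
          ← Subgroup.map_commutator, ← hN''def, hN''bot]
      rw [Subgroup.map_eq_bot_iff, hker] at key
      exact key
    · exact sup_le (Subgroup.normalClosure_le_normal hΔ)
        (le_trans hN''leN' hN'leN)
  · -- (iii)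
    intro hsolv hgen
    set M := Subgroup.normalClosure Δ with hMdef
    apply le_antisymm
    · set φ := QuotientGroup.mk' M
      have hker : φ.ker = M := QuotientGroup.ker_mk' M
      have hclbot : Subgroup.map φ (Subgroup.closure Δ) = ⊥ := by
        rw [Subgroup.map_eq_bot_iff, hker]
        exact Subgroup.closure_le_normalClosure
      have hmapN : Subgroup.map φ N = Subgroup.map φ N' := by
        rw [hgen, Subgroup.map_sup, hclbot, bot_sup_eq]
      set P := Subgroup.map φ N with hPdef
      have hperf : ⁅P, P⁆ = P := by
        rw [hPdef, ← Subgroup.map_commutator, ← hN'def, ← hmapN]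
      -- P is solvable
      have hsolvP : IsSolvable P := by
        have : P = (φ.comp N.subtype).range := by
          rw [← MonoidHom.map_range, Subgroup.range_subtype]
        rw [this]
        haveI : Group.IsSolvable N := hsolv
        exact solvable_of_surjective (MonoidHom.rangeRestrict_surjective (φ.comp N.subtype))
      -- a perfect solvable subgroup is trivial
      have hPbot : P = ⊥ := by
        obtain ⟨n, hn⟩ := hsolvP.solvable
        have hder : ∀ m : ℕ, Subgroup.map P.subtype (derivedSeries P m) = P := by
          intro m
          induction m with
          | zero =>
            rw [derivedSeries_zero, ← MonoidHom.range_eq_map, Subgroup.range_subtype]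
          | succ m ih =>
            rw [derivedSeries_succ, Subgroup.map_commutator, ih, hperf]
        have := hder n
        rw [hn, Subgroup.map_bot] at this
        exact this.symm
      rw [hPdef] at hPbot
      rw [Subgroup.map_eq_bot_iff, hker] at hPbot
      exact hPbot
    · exact Subgroup.normalClosure_le_normal hΔ
end

section
/- There exists a constant C > 0 with the following property: for every finite solvable group G and every subset Σ ⊆ G generating G, there exist a generating set Δ ⊆ G adapted to the derived series of G — meaning that for every i ≥ 0 the set Δ ∩ G^{(i)} generates the i-th derived subgroup G^{(i)} — and a group straight-line sequence over Σ of length at most C·(log₂|G| + 1) computing the set Δ. -/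
set_option maxHeartbeats 1000000
open Subgroup
open scoped commutatorElement

/-- A group straight-line sequence over `Sig`: every entry is a generator from `Sig`,
a product of two earlier entries, or the inverse of an earlier entry. -/
def IsGroupSLSeq {G : Type*} [Group G] (Sig : Set G) (L : List G) : Prop :=
  ∀ m : Fin L.length, L.get m ∈ Sig ∨
    (∃ i j : Fin L.length, (i : ℕ) < (m : ℕ) ∧ (j : ℕ) < (m : ℕ) ∧
      L.get m = L.get i * L.get j) ∨
    (∃ i : Fin L.length, (i : ℕ) < (m : ℕ) ∧ L.get m = (L.get i)⁻¹)

namespace SLaux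

variable {G : Type*} [Group G] {Sig : Set G}

omit [Group G] in
lemma get_append_left (L : List G) (a : G) (k : ℕ) (hk : k < L.length)
    (hk' : k < (L ++ [a]).length) : (L ++ [a]).get ⟨k, hk'⟩ = L.get ⟨k, hk⟩ := by
  simp [List.get_eq_getElem, List.getElem_append_left, hk]

omit [Group G] in
lemma get_append_last (L : List G) (a : G)
    (hk : L.length < (L ++ [a]).length) : (L ++ [a]).get ⟨L.length, hk⟩ = a := by
  simp [List.get_eq_getElem]

lemma slseq_append {L : List G} (hL : IsGroupSLSeq Sig L) {a : G}
    (ha : a ∈ Sig ∨ (∃ x ∈ L, ∃ y ∈ L, a = x * y) ∨ (∃ x ∈ L, a = x⁻¹)) :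
    IsGroupSLSeq Sig (L ++ [a]) := by
  intro m
  have hlen : (L ++ [a]).length = L.length + 1 := by simp
  by_cases hm : (m : ℕ) < L.length
  · have hget : (L ++ [a]).get m = L.get ⟨m, hm⟩ := by
      have h2 : m = ⟨(m : ℕ), m.2⟩ := Fin.ext rfl
      conv_lhs => rw [h2]
      exact get_append_left L a m hm m.2
    rcases hL ⟨m, hm⟩ with h | ⟨i, j, hi, hj, h⟩ | ⟨i, hi, h⟩
    · left; rw [hget]; exact h
    · right; left
      have hi2 : (i : ℕ) < (L ++ [a]).length := by rw [hlen]; have := i.2; omega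
      have hj2 : (j : ℕ) < (L ++ [a]).length := by rw [hlen]; have := j.2; omega
      refine ⟨⟨i, hi2⟩, ⟨j, hj2⟩, hi, hj, ?_⟩
      rw [hget, get_append_left L a i i.2 hi2, get_append_left L a j j.2 hj2]
      simpa using h
    · right; right
      have hi2 : (i : ℕ) < (L ++ [a]).length := by rw [hlen]; have := i.2; omega
      refine ⟨⟨i, hi2⟩, hi, ?_⟩
      rw [hget, get_append_left L a i i.2 hi2]
      simpa using h
  · have h3 : (m : ℕ) < L.length + 1 := by simpa using m.2
    have hm' : (m : ℕ) = L.length := by omega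
    have hget : (L ++ [a]).get m = a := by
      have h2 : m = ⟨L.length, by rw [hlen]; omega⟩ := Fin.ext (by simpa using hm')
      conv_lhs => rw [h2]
      exact get_append_last L a _
    rcases ha with h | ⟨x, hx, y, hy, h⟩ | ⟨x, hx, h⟩
    · left; rw [hget]; exact h
    · right; left
      obtain ⟨ix, hix⟩ := List.mem_iff_get.1 hx
      obtain ⟨iy, hiy⟩ := List.mem_iff_get.1 hy
      have hix2 : (ix : ℕ) < (L ++ [a]).length := by rw [hlen]; have := ix.2; omega
      have hiy2 : (iy : ℕ) < (L ++ [a]).length := by rw [hlen]; have := iy.2; omega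
      refine ⟨⟨ix, hix2⟩, ⟨iy, hiy2⟩, by rw [hm']; exact ix.2, by rw [hm']; exact iy.2, ?_⟩
      rw [hget, get_append_left L a ix ix.2 hix2, get_append_left L a iy iy.2 hiy2]
      simp only [Fin.eta, hix, hiy, h]
    · right; right
      obtain ⟨ix, hix⟩ := List.mem_iff_get.1 hx
      have hix2 : (ix : ℕ) < (L ++ [a]).length := by rw [hlen]; have := ix.2; omega
      refine ⟨⟨ix, hix2⟩, by rw [hm']; exact ix.2, ?_⟩
      rw [hget, get_append_left L a ix ix.2 hix2]
      simp only [Fin.eta, hix, h]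


variable {G : Type*} [Group G]


lemma closure_comm {T : Set G} (h : ∀ a ∈ T, ∀ b ∈ T, Commute a b) :
    ∀ x ∈ closure T, ∀ y ∈ closure T, Commute x y := by
  intro x hx y hy
  refine Subgroup.closure_induction₂ (p := fun a b _ _ => Commute a b)
    (fun a b ha hb => h a ha b hb)
    (fun x _ => Commute.one_left x) (fun x _ => Commute.one_right x)
    (fun a b c _ _ _ h1 h2 => h1.mul_left h2)
    (fun a b c _ _ _ h1 h2 => h1.mul_right h2)
    (fun a b _ _ h1 => h1.inv_left)
    (fun a b _ _ h1 => h1.inv_right) hx hy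

/-- If all commutators of pairs from `S` lie in the normal subgroup `N`, then
`closure S ⊔ N` has its commutator subgroup inside `N`. -/
lemma commutator_le_of_comm_mod {N : Subgroup G} [hN : N.Normal] {S : Set G}
    (h : ∀ a ∈ S, ∀ b ∈ S, ⁅a, b⁆ ∈ N) :
    ⁅closure S ⊔ N, closure S ⊔ N⁆ ≤ N := by
  set f := QuotientGroup.mk' N with hf
  have hker : f.ker = N := QuotientGroup.ker_mk' N
  have himg : ∀ a ∈ f '' S, ∀ b ∈ f '' S, Commute a b := by
    rintro _ ⟨a, ha, rfl⟩ _ ⟨b, hb, rfl⟩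
    have : f ⁅a, b⁆ = 1 := by
      rw [← MonoidHom.mem_ker, hker]; exact h a ha b hb
    rw [map_commutatorElement] at this
    exact commutatorElement_eq_one_iff_commute.1 this
  have hmap : (closure S ⊔ N).map f = closure (f '' S) := by
    rw [Subgroup.map_sup, MonoidHom.map_closure]
    have : N.map f = ⊥ := by
      rw [Subgroup.map_eq_bot_iff, hker]
    rw [this, sup_bot_eq]
  have hcomm : ⁅(closure S ⊔ N).map f, (closure S ⊔ N).map f⁆ = ⊥ := by
    rw [eq_bot_iff, hmap]
    rw [Subgroup.commutator_le]
    intro g1 hg1 g2 hg2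
    have := closure_comm himg g1 hg1 g2 hg2
    simpa [Subgroup.mem_bot] using commutatorElement_eq_one_iff_commute.2 this
  have : (⁅closure S ⊔ N, closure S ⊔ N⁆).map f = ⊥ := by
    rw [Subgroup.map_commutator]; exact hcomm
  rw [Subgroup.map_eq_bot_iff, hker] at this
  exact this

lemma derivedSeries_antitone' (n : ℕ) : derivedSeries G (n + 1) ≤ derivedSeries G n := by
  rw [derivedSeries_succ, Subgroup.commutator_le]
  intro g1 h1 g2 h2
  rw [commutatorElement_def]
  exact mul_mem (mul_mem (mul_mem h1 h2) (inv_mem h1)) (inv_mem h2)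

lemma derivedSeries_le_of_le {m n : ℕ} (h : m ≤ n) :
    derivedSeries G n ≤ derivedSeries G m := by
  induction n with
  | zero => simpa [Nat.le_zero.1 h]
  | succ k ih =>
    rcases Nat.lt_or_ge m (k+1) with h2 | h2
    · exact le_trans (derivedSeries_antitone' k) (ih (by omega))
    · have : m = k + 1 := by omega
      subst this; rfl

lemma derivedSeries_bot_of_ge {M m : ℕ} (hM : derivedSeries G M = ⊥) (h : M ≤ m) :
    derivedSeries G m = ⊥ :=
  le_antisymm (hM ▸ derivedSeries_le_of_le h) bot_le

/-- The key induction step. -/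
lemma step_T (X : Set G) (m : ℕ)
    (hT : closure (X ∩ (derivedSeries G m : Set G)) ⊔ derivedSeries G (m+2) = derivedSeries G m)
    (hK : (closure (X ∩ (derivedSeries G (m+1) : Set G)) ⊔ derivedSeries G (m+3)).Normal)
    (hc : ∀ y ∈ X ∩ (derivedSeries G m : Set G), ∀ y' ∈ X ∩ (derivedSeries G m : Set G),
      ⁅y, y'⁆ ∈ closure (X ∩ (derivedSeries G (m+1) : Set G)) ⊔ derivedSeries G (m+3)) :
    closure (X ∩ (derivedSeries G (m+1) : Set G)) ⊔ derivedSeries G (m+3)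
      = derivedSeries G (m+1) := by
  have hKle : closure (X ∩ (derivedSeries G (m+1) : Set G)) ⊔ derivedSeries G (m+3)
      ≤ derivedSeries G (m+1) := by
    apply sup_le
    · exact (Subgroup.closure_le _).2 (Set.inter_subset_right)
    · exact derivedSeries_le_of_le (by omega)
  have hN1normal : ((closure (X ∩ (derivedSeries G (m+1) : Set G)) ⊔ derivedSeries G (m+3))
      ⊔ derivedSeries G (m+2)).Normal := by
    have h2 : (derivedSeries G (m+2)).Normal := derivedSeries_normal G (m+2)
    exact Subgroup.sup_normal _ _
  have hN1le : (closure (X ∩ (derivedSeries G (m+1) : Set G)) ⊔ derivedSeries G (m+3))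
      ⊔ derivedSeries G (m+2) ≤ derivedSeries G (m+1) :=
    sup_le hKle (derivedSeries_antitone' (m+1))
  -- step (a)
  have ha : derivedSeries G (m+1) ≤
      (closure (X ∩ (derivedSeries G (m+1) : Set G)) ⊔ derivedSeries G (m+3))
      ⊔ derivedSeries G (m+2) := by
    have hsup : closure (X ∩ (derivedSeries G m : Set G)) ⊔
        ((closure (X ∩ (derivedSeries G (m+1) : Set G)) ⊔ derivedSeries G (m+3))
          ⊔ derivedSeries G (m+2)) = derivedSeries G m := by
      apply le_antisymm
      · apply sup_le
        · exact (Subgroup.closure_le _).2 (Set.inter_subset_right)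
        · exact le_trans hN1le (derivedSeries_antitone' m)
      · conv_lhs => rw [← hT]
        exact sup_le_sup_left le_sup_right _
    have hcomm' : ∀ a ∈ X ∩ (derivedSeries G m : Set G),
        ∀ b ∈ X ∩ (derivedSeries G m : Set G), ⁅a, b⁆ ∈
          (closure (X ∩ (derivedSeries G (m+1) : Set G)) ⊔ derivedSeries G (m+3))
          ⊔ derivedSeries G (m+2) :=
      fun a haa b hbb => Subgroup.mem_sup_left (hc a haa b hbb)
    have h3 := commutator_le_of_comm_mod (hN := hN1normal) hcomm'
    rw [hsup] at h3
    rw [derivedSeries_succ]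
    exact h3
  -- step (b)
  have hb : derivedSeries G (m+2) ≤
      closure (X ∩ (derivedSeries G (m+1) : Set G)) ⊔ derivedSeries G (m+3) := by
    haveI := hK
    set f := QuotientGroup.mk' (closure (X ∩ (derivedSeries G (m+1) : Set G))
      ⊔ derivedSeries G (m+3)) with hf
    have hker : f.ker = closure (X ∩ (derivedSeries G (m+1) : Set G))
        ⊔ derivedSeries G (m+3) := QuotientGroup.ker_mk' _
    have hBbar : (derivedSeries G (m+1)).map f ≤ (derivedSeries G (m+2)).map f := by
      calc (derivedSeries G (m+1)).map f
          ≤ ((closure (X ∩ (derivedSeries G (m+1) : Set G)) ⊔ derivedSeries G (m+3))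
            ⊔ derivedSeries G (m+2)).map f := Subgroup.map_mono ha
        _ = (closure (X ∩ (derivedSeries G (m+1) : Set G))
              ⊔ derivedSeries G (m+3)).map f ⊔ (derivedSeries G (m+2)).map f :=
            Subgroup.map_sup _ _ f
        _ = (derivedSeries G (m+2)).map f := by
            rw [show (closure (X ∩ (derivedSeries G (m+1) : Set G))
              ⊔ derivedSeries G (m+3)).map f = ⊥ by
                rw [Subgroup.map_eq_bot_iff, hker], bot_sup_eq]
    have hmain : (derivedSeries G (m+2)).map f = ⊥ := by
      have h1 : (derivedSeries G (m+2)).map f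
          = ⁅(derivedSeries G (m+1)).map f, (derivedSeries G (m+1)).map f⁆ := by
        rw [← Subgroup.map_commutator, ← derivedSeries_succ]
      rw [h1, eq_bot_iff]
      calc ⁅(derivedSeries G (m+1)).map f, (derivedSeries G (m+1)).map f⁆
          ≤ ⁅(derivedSeries G (m+2)).map f, (derivedSeries G (m+2)).map f⁆ :=
            Subgroup.commutator_mono hBbar hBbar
        _ = (derivedSeries G (m+3)).map f := by
            rw [← Subgroup.map_commutator, ← derivedSeries_succ]
        _ = ⊥ := by
            rw [Subgroup.map_eq_bot_iff, hker]
            exact le_sup_right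
        _ ≤ ⊥ := le_refl _
    rw [Subgroup.map_eq_bot_iff, hker] at hmain
    exact hmain
  apply le_antisymm hKle
  calc derivedSeries G (m+1)
      ≤ (closure (X ∩ (derivedSeries G (m+1) : Set G)) ⊔ derivedSeries G (m+3))
        ⊔ derivedSeries G (m+2) := ha
    _ ≤ (closure (X ∩ (derivedSeries G (m+1) : Set G)) ⊔ derivedSeries G (m+3))
        ⊔ (closure (X ∩ (derivedSeries G (m+1) : Set G)) ⊔ derivedSeries G (m+3)) :=
        sup_le_sup_left hb _
    _ = closure (X ∩ (derivedSeries G (m+1) : Set G)) ⊔ derivedSeries G (m+3) := sup_idem _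



section Phi
variable (G)
variable [Finite G]

/-- level-`m` part of a set. -/
def Dset (X : Set G) (m : ℕ) : Set G := X ∩ (derivedSeries G m : Set G)

/-- the level-`m` covered subgroup. -/
def Ksub (X : Set G) (m : ℕ) : Subgroup G :=
  closure (Dset G X m) ⊔ derivedSeries G (m+2)

/-- potential function. -/
noncomputable def phi (M : ℕ) (X : Set G) : ℕ :=
  Nat.card (closure X) * ∏ m ∈ Finset.range M, Nat.card (Ksub G X m)

noncomputable def phimin (M : ℕ) : ℕ := ∏ m ∈ Finset.range M, Nat.card (derivedSeries G (m+2))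

end Phi

variable [Finite G]

lemma two_mul_card_le {H K : Subgroup G} (hle : H ≤ K) (hne : H ≠ K) :
    2 * Nat.card H ≤ Nat.card K := by
  obtain ⟨k, hk⟩ := Subgroup.card_dvd_of_le hle
  have hpos : 0 < Nat.card H := Nat.card_pos
  have hk2 : 2 ≤ k := by
    rcases Nat.lt_or_ge k 2 with h | h
    · interval_cases k
      · simp at hk
        have := Nat.card_pos (α := K)
        omega
      · rw [mul_one] at hk
        exact absurd (Subgroup.eq_of_le_of_card_ge hle (le_of_eq hk)) hne
    · exact h
  calc 2 * Nat.card H = Nat.card H * 2 := by ring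
    _ ≤ Nat.card H * k := Nat.mul_le_mul_left _ hk2
    _ = Nat.card K := by rw [← hk]

lemma Ksub_mono {X X' : Set G} (h : X ⊆ X') (m : ℕ) : Ksub G X m ≤ Ksub G X' m :=
  sup_le_sup_right (closure_mono (Set.inter_subset_inter_left _ h)) _

lemma Ksub_le (X : Set G) (m : ℕ) : Ksub G X m ≤ derivedSeries G m := by
  apply sup_le
  · exact (Subgroup.closure_le _).2 Set.inter_subset_right
  · intro g hg
    exact derivedSeries_le_of_le (by omega) hg

lemma phi_pos (M : ℕ) (X : Set G) : 0 < phi G M X := by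
  apply Nat.mul_pos Nat.card_pos
  apply Finset.prod_pos
  intro i _
  exact Nat.card_pos

lemma phimin_pos (M : ℕ) : 0 < phimin G M := by
  apply Finset.prod_pos; intro i _; exact Nat.card_pos

lemma phi_mono {X X' : Set G} (h : X ⊆ X') (M : ℕ) : phi G M X ≤ phi G M X' := by
  apply Nat.mul_le_mul
  · exact Subgroup.card_le_of_le (closure_mono h)
  · apply Finset.prod_le_prod
    · intro i _; exact Nat.zero_le _
    · intro i _; exact Subgroup.card_le_of_le (Ksub_mono h i)

lemma prod_shift (c : ℕ → ℕ) (N : ℕ) :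
    (∏ m ∈ Finset.range N, c m) * (c N * c (N+1))
      = c 0 * c 1 * ∏ m ∈ Finset.range N, c (m+2) := by
  induction N with
  | zero => simp
  | succ n ih =>
    rw [Finset.prod_range_succ, Finset.prod_range_succ]
    calc ((∏ m ∈ Finset.range n, c m) * c n) * (c (n+1) * (c (n+1+1)))
        = ((∏ m ∈ Finset.range n, c m) * (c n * c (n+1))) * c (n+2) := by ring
      _ = (c 0 * c 1 * ∏ m ∈ Finset.range n, c (m+2)) * c (n+2) := by rw [ih]
      _ = c 0 * c 1 * ((∏ m ∈ Finset.range n, c (m+2)) * c (n+2)) := by ring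

lemma phi_le (M : ℕ) (X : Set G) :
    phi G M X ≤ Nat.card G ^ 3 * phimin G M := by
  have h1 : phi G M X ≤ Nat.card G * ∏ m ∈ Finset.range M, Nat.card (derivedSeries G m) := by
    apply Nat.mul_le_mul
    · exact Subgroup.card_le_card_group _
    · apply Finset.prod_le_prod
      · intro i _; exact Nat.zero_le _
      · intro i _; exact Subgroup.card_le_of_le (Ksub_le X i)
  have h2 : (∏ m ∈ Finset.range M, Nat.card (derivedSeries G m))
      ≤ Nat.card G * Nat.card G * phimin G M := by
    have h3 := prod_shift (fun m => Nat.card (derivedSeries G m)) M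
    have h4 : (∏ m ∈ Finset.range M, Nat.card (derivedSeries G m))
        ≤ (∏ m ∈ Finset.range M, Nat.card (derivedSeries G m)) *
          (Nat.card (derivedSeries G M) * Nat.card (derivedSeries G (M+1))) := by
      have : 0 < Nat.card (derivedSeries G M) * Nat.card (derivedSeries G (M+1)) :=
        Nat.mul_pos Nat.card_pos Nat.card_pos
      exact Nat.le_mul_of_pos_right _ this
    calc (∏ m ∈ Finset.range M, Nat.card (derivedSeries G m))
        ≤ (∏ m ∈ Finset.range M, Nat.card (derivedSeries G m)) *
          (Nat.card (derivedSeries G M) * Nat.card (derivedSeries G (M+1))) := h4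
      _ = Nat.card (derivedSeries G 0) * Nat.card (derivedSeries G 1) *
          ∏ m ∈ Finset.range M, Nat.card (derivedSeries G (m+2)) := h3
      _ ≤ Nat.card G * Nat.card G * phimin G M := by
          apply Nat.mul_le_mul
          · exact Nat.mul_le_mul (Subgroup.card_le_card_group _) (Subgroup.card_le_card_group _)
          · exact le_refl _
  calc phi G M X ≤ Nat.card G * ∏ m ∈ Finset.range M, Nat.card (derivedSeries G m) := h1
    _ ≤ Nat.card G * (Nat.card G * Nat.card G * phimin G M) := Nat.mul_le_mul_left _ h2
    _ = Nat.card G ^ 3 * phimin G M := by ring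

/-- doubling when adding a "raising" element. -/
lemma phi_double {X X' : Set G} (M : ℕ) (hsub : X ⊆ X') {z : G} (hz : z ∈ X')
    (hraise : z ∉ closure X ∨ ∃ m, m < M ∧ z ∈ derivedSeries G m ∧ z ∉ Ksub G X m) :
    2 * phi G M X ≤ phi G M X' := by
  rcases hraise with h | ⟨m, hm, hzd, hzk⟩
  · have hlt : closure X ≠ closure X' := by
      intro he
      exact h (he ▸ Subgroup.subset_closure hz)
    have h2 : 2 * Nat.card (closure X) ≤ Nat.card (closure X') :=
      two_mul_card_le (closure_mono hsub) hlt
    calc 2 * phi G M X = (2 * Nat.card (closure X)) *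
          ∏ m ∈ Finset.range M, Nat.card (Ksub G X m) := by rw [phi]; ring
      _ ≤ Nat.card (closure X') * ∏ m ∈ Finset.range M, Nat.card (Ksub G X' m) := by
          apply Nat.mul_le_mul h2
          apply Finset.prod_le_prod
          · intro i _; exact Nat.zero_le _
          · intro i _; exact Subgroup.card_le_of_le (Ksub_mono hsub i)
      _ = phi G M X' := rfl
  · have hzK' : z ∈ Ksub G X' m := by
      apply Subgroup.mem_sup_left
      exact Subgroup.subset_closure ⟨hz, hzd⟩
    have hne : Ksub G X m ≠ Ksub G X' m := fun he => hzk (he ▸ hzK')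
    have h2 : 2 * Nat.card (Ksub G X m) ≤ Nat.card (Ksub G X' m) :=
      two_mul_card_le (Ksub_mono hsub m) hne
    have hmem : m ∈ Finset.range M := Finset.mem_range.2 hm
    have hprod : 2 * ∏ i ∈ Finset.range M, Nat.card (Ksub G X i)
        ≤ ∏ i ∈ Finset.range M, Nat.card (Ksub G X' i) := by
      rw [← Finset.mul_prod_erase _ _ hmem, ← Finset.mul_prod_erase _ _ hmem]
      calc 2 * (Nat.card (Ksub G X m) * ∏ i ∈ (Finset.range M).erase m, Nat.card (Ksub G X i))
          = (2 * Nat.card (Ksub G X m)) * ∏ i ∈ (Finset.range M).erase m,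
              Nat.card (Ksub G X i) := by ring
        _ ≤ Nat.card (Ksub G X' m) * ∏ i ∈ (Finset.range M).erase m,
              Nat.card (Ksub G X' i) := by
            apply Nat.mul_le_mul h2
            apply Finset.prod_le_prod
            · intro i _; exact Nat.zero_le _
            · intro i _; exact Subgroup.card_le_of_le (Ksub_mono hsub i)
    calc 2 * phi G M X = Nat.card (closure X) *
          (2 * ∏ i ∈ Finset.range M, Nat.card (Ksub G X i)) := by rw [phi]; ring
      _ ≤ Nat.card (closure X') * ∏ i ∈ Finset.range M, Nat.card (Ksub G X' i) :=
          Nat.mul_le_mul (Subgroup.card_le_of_le (closure_mono hsub)) hprod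
      _ = phi G M X' := rfl


section Builder

variable (Sig : Set G)

def entries (L : List G) : Set G := {x | x ∈ L}

def Cand (L : List G) (z : G) : Prop :=
  z ∈ Sig ∨ ∃ x ∈ L, ∃ y ∈ L, z = x * y * x⁻¹ ∨ z = ⁅x, y⁆

def Raises (M : ℕ) (X : Set G) (z : G) : Prop :=
  z ∉ closure X ∨ ∃ m, m < M ∧ z ∈ derivedSeries G m ∧ z ∉ Ksub G X m

omit [Finite G] in
lemma entries_append (L L' : List G) : entries (L ++ L') = entries L ∪ entries L' := by
  ext a; simp [entries]

omit [Finite G] in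
/-- one improvement step -/
lemma step {L : List G} (hSL : IsGroupSLSeq Sig L) (hinv : ∀ x ∈ L, x⁻¹ ∈ L)
    {z : G} (hc : Cand Sig L z) :
    ∃ L' : List G, IsGroupSLSeq Sig L' ∧ (∀ x ∈ L', x⁻¹ ∈ L') ∧
      L'.length ≤ L.length + 6 ∧ entries L ⊆ entries L' ∧ z ∈ entries L' := by
  rcases hc with hz | ⟨x, hx, y, hy, hz | hz⟩
  · refine ⟨L ++ [z] ++ [z⁻¹], ?_, ?_, ?_, ?_, ?_⟩
    · have h1 := slseq_append hSL (Or.inl hz)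
      exact slseq_append h1
        (Or.inr (Or.inr ⟨z, List.mem_append_right _ (by simp), rfl⟩))
    · intro a ha
      rcases (by simpa using ha : a ∈ L ∨ a = z ∨ a = z⁻¹) with h | h | h
      · exact List.mem_append_left _ (List.mem_append_left _ (hinv a h))
      · subst h; exact List.mem_append_right _ (by simp)
      · subst h
        exact List.mem_append_left _ (List.mem_append_right _ (by simp [inv_inv]))
    · simp
    · intro a ha; simp [entries] at ha ⊢; tauto
    · simp [entries]
  · -- conjugation z = x * y * x⁻¹
    subst hz
    refine ⟨L ++ [x*y] ++ [x*y*x⁻¹] ++ [(x*y*x⁻¹)⁻¹] ++ [(x*y)⁻¹], ?_, ?_, ?_, ?_, ?_⟩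
    · have h1 := slseq_append hSL (Or.inr (Or.inl ⟨x, hx, y, hy, rfl⟩))
      have h2 := slseq_append h1 (Or.inr (Or.inl
        ⟨x*y, List.mem_append_right _ (by simp),
         x⁻¹, List.mem_append_left _ (hinv x hx), rfl⟩))
      have h3 := slseq_append h2 (Or.inr (Or.inr
        ⟨x*y*x⁻¹, List.mem_append_right _ (by simp), rfl⟩))
      exact slseq_append h3 (Or.inr (Or.inr
        ⟨x*y, List.mem_append_left _ (List.mem_append_left _
          (List.mem_append_right _ (by simp))), rfl⟩))
    · intro a ha
      rcases (by simpa using ha :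
        a ∈ L ∨ a = x*y ∨ a = x*y*x⁻¹ ∨ a = (x*y*x⁻¹)⁻¹ ∨ a = (x*y)⁻¹)
        with h|h|h|h|h
      · exact List.mem_append_left _ (List.mem_append_left _ (List.mem_append_left _
          (List.mem_append_left _ (hinv a h))))
      · subst h; exact List.mem_append_right _ (by simp)
      · subst h; exact List.mem_append_left _ (List.mem_append_right _ (by simp))
      · subst h; exact List.mem_append_left _ (List.mem_append_left _
          (List.mem_append_right _ (by simp [inv_inv])))
      · subst h; exact List.mem_append_left _ (List.mem_append_left _
          (List.mem_append_left _ (List.mem_append_right _ (by simp [inv_inv]))))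
    · simp
    · intro a ha; simp [entries] at ha ⊢; tauto
    · simp [entries]
  · -- commutator z = ⁅x,y⁆
    subst hz
    refine ⟨L ++ [x*y] ++ [x*y*x⁻¹] ++ [⁅x,y⁆] ++ [(x*y)⁻¹] ++ [(x*y*x⁻¹)⁻¹] ++ [⁅x,y⁆⁻¹],
      ?_, ?_, ?_, ?_, ?_⟩
    · have h1 := slseq_append hSL (Or.inr (Or.inl ⟨x, hx, y, hy, rfl⟩))
      have h2 := slseq_append h1 (Or.inr (Or.inl
        ⟨x*y, List.mem_append_right _ (by simp),
         x⁻¹, List.mem_append_left _ (hinv x hx), rfl⟩))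
      have h3 := slseq_append h2 (Or.inr (Or.inl
        ⟨x*y*x⁻¹, List.mem_append_right _ (by simp),
         y⁻¹, List.mem_append_left _ (List.mem_append_left _ (hinv y hy)),
         commutatorElement_def x y⟩))
      have h4 := slseq_append h3 (Or.inr (Or.inr
        ⟨x*y, List.mem_append_left _ (List.mem_append_left _
          (List.mem_append_right _ (by simp))), rfl⟩))
      have h5 := slseq_append h4 (Or.inr (Or.inr
        ⟨x*y*x⁻¹, List.mem_append_left _ (List.mem_append_left _
          (List.mem_append_right _ (by simp))), rfl⟩))
      exact slseq_append h5 (Or.inr (Or.inr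
        ⟨⁅x,y⁆, List.mem_append_left _ (List.mem_append_left _
          (List.mem_append_right _ (by simp))), rfl⟩))
    · intro a ha
      rcases (by simpa using ha :
        a ∈ L ∨ a = x*y ∨ a = x*y*x⁻¹ ∨ a = ⁅x,y⁆ ∨ a = (x*y)⁻¹ ∨ a = (x*y*x⁻¹)⁻¹
          ∨ a = ⁅x,y⁆⁻¹) with h|h|h|h|h|h|h
      · exact List.mem_append_left _ (List.mem_append_left _ (List.mem_append_left _
          (List.mem_append_left _ (List.mem_append_left _
            (List.mem_append_left _ (hinv a h))))))
      · subst h; exact List.mem_append_left _ (List.mem_append_left _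
          (List.mem_append_right _ (by simp)))
      · subst h; exact List.mem_append_left _ (List.mem_append_right _ (by simp [inv_inv]))
      · subst h; exact List.mem_append_right _ (by simp)
      · subst h; exact List.mem_append_left _ (List.mem_append_left _
          (List.mem_append_left _ (List.mem_append_left _ (List.mem_append_left _
            (List.mem_append_right _ (by simp [inv_inv]))))))
      · subst h; exact List.mem_append_left _ (List.mem_append_left _
          (List.mem_append_left _ (List.mem_append_left _
            (List.mem_append_right _ (by simp [inv_inv])))))
      · subst h; exact List.mem_append_left _ (List.mem_append_left _
          (List.mem_append_left _ (List.mem_append_right _ (by simp [inv_inv]))))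
    · simp
    · intro a ha; simp [entries] at ha ⊢; tauto
    · simp [entries]

def Good (M : ℕ) (L : List G) : Prop :=
  IsGroupSLSeq Sig L ∧ (∀ x ∈ L, x⁻¹ ∈ L) ∧
    phimin G M ^ 6 * 2 ^ L.length ≤ phi G M (entries L) ^ 6

lemma good_step {M : ℕ} {L : List G} (hG : Good Sig M L) {z : G}
    (hc : Cand Sig L z) (hr : Raises M (entries L) z) :
    ∃ L' : List G, Good Sig M L' ∧ phi G M (entries L) < phi G M (entries L') := by
  obtain ⟨hSL, hinv, hlen⟩ := hG
  obtain ⟨L', hSL', hinv', hlen', hsub', hmem'⟩ := step Sig hSL hinv hc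
  have hdouble : 2 * phi G M (entries L) ≤ phi G M (entries L') :=
    phi_double M hsub' hmem' hr
  have hpos : 0 < phi G M (entries L) := phi_pos M _
  refine ⟨L', ⟨hSL', hinv', ?_⟩, by omega⟩
  calc phimin G M ^ 6 * 2 ^ L'.length ≤ phimin G M ^ 6 * 2 ^ (L.length + 6) := by
        apply Nat.mul_le_mul_left
        exact Nat.pow_le_pow_right (by norm_num) hlen'
    _ = (phimin G M ^ 6 * 2 ^ L.length) * 2 ^ 6 := by ring
    _ ≤ phi G M (entries L) ^ 6 * 2 ^ 6 := Nat.mul_le_mul_right _ hlen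
    _ = (2 * phi G M (entries L)) ^ 6 := by ring
    _ ≤ phi G M (entries L') ^ 6 := Nat.pow_le_pow_left hdouble 6

lemma build (M : ℕ) : ∀ (n : ℕ) (L : List G), Good Sig M L →
    Nat.card G ^ 3 * phimin G M ≤ phi G M (entries L) + n →
    ∃ L', Good Sig M L' ∧ ∀ z, Cand Sig L' z → ¬ Raises M (entries L') z := by
  intro n
  induction n with
  | zero =>
    intro L hG hcap
    by_cases h : ∃ z, Cand Sig L z ∧ Raises M (entries L) z
    · obtain ⟨z, hc, hr⟩ := h
      obtain ⟨L', hG', hlt⟩ := good_step Sig hG hc hr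
      have h1 : phi G M (entries L') ≤ Nat.card G ^ 3 * phimin G M := phi_le M _
      omega
    · push_neg at h
      exact ⟨L, hG, h⟩
  | succ n ih =>
    intro L hG hcap
    by_cases h : ∃ z, Cand Sig L z ∧ Raises M (entries L) z
    · obtain ⟨z, hc, hr⟩ := h
      obtain ⟨L', hG', hlt⟩ := good_step Sig hG hc hr
      exact ih L' hG' (by omega)
    · push_neg at h
      exact ⟨L, hG, h⟩

omit [Finite G] in
lemma entries_nil : entries (G := G) [] = ∅ := by
  ext a; simp [entries]

lemma good_nil (M : ℕ) : Good Sig M [] := by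
  refine ⟨?_, by simp, ?_⟩
  · intro m; exact absurd m.2 (by simp)
  · have : phi G M (entries ([] : List G)) = phimin G M := by
      rw [entries_nil]
      unfold phi phimin
      have h1 : closure (∅ : Set G) = ⊥ := Subgroup.closure_empty
      rw [h1]
      have h2 : ∀ m, Ksub G (∅ : Set G) m = derivedSeries G (m+2) := by
        intro m
        unfold Ksub Dset
        rw [Set.empty_inter, Subgroup.closure_empty, bot_sup_eq]
      simp only [h2]
      simp
    rw [this]
    simp

end Builder

section FixedPoint

variable (Sig : Set G) (M : ℕ)

/-- At a fixed point, every candidate is absorbed. -/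
lemma fp_absorb {L : List G} (hFP : ∀ z, Cand Sig L z → ¬ Raises M (entries L) z) :
    ∀ z, Cand Sig L z →
      z ∈ closure (entries L) ∧ ∀ m, m < M → z ∈ derivedSeries G m → z ∈ Ksub G (entries L) m := by
  intro z hz
  have h := hFP z hz
  unfold Raises at h
  push_neg at h
  obtain ⟨h1, h2⟩ := h
  exact ⟨h1, h2⟩

lemma fp_top {L : List G} (hSig : closure Sig = ⊤)
    (hFP : ∀ z, Cand Sig L z → ¬ Raises M (entries L) z) :
    closure (entries L) = ⊤ := by
  apply le_antisymm le_top
  rw [← hSig]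
  apply (Subgroup.closure_le _).2
  intro s hs
  exact (fp_absorb Sig M hFP s (Or.inl hs)).1

lemma fp_normal {L : List G} (hSig : closure Sig = ⊤)
    (hinv : ∀ x ∈ L, x⁻¹ ∈ L)
    (hFP : ∀ z, Cand Sig L z → ¬ Raises M (entries L) z)
    {m : ℕ} (hm : m < M) : (Ksub G (entries L) m).Normal := by
  have habs := fp_absorb Sig M hFP
  have hconj : ∀ x ∈ L, ∀ h ∈ Ksub G (entries L) m, x * h * x⁻¹ ∈ Ksub G (entries L) m := by
    intro x hxL h hh
    have hKeq : Ksub G (entries L) m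
        = closure (Dset G (entries L) m ∪ (derivedSeries G (m+2) : Set G)) := by
      rw [Subgroup.closure_union, Subgroup.closure_eq]; rfl
    rw [hKeq] at hh ⊢
    induction hh using Subgroup.closure_induction with
    | mem a ha =>
      rcases ha with ha | ha
      · -- a is an element of Dset
        have hcand : Cand Sig L (x * a * x⁻¹) :=
          Or.inr ⟨x, hxL, a, ha.1, Or.inl rfl⟩
        have hlevel : x * a * x⁻¹ ∈ derivedSeries G m :=
          (derivedSeries_normal G m).conj_mem a ha.2 x
        have := (habs _ hcand).2 m hm hlevel
        rw [hKeq] at this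
        exact this
      · -- a ∈ derivedSeries (m+2)
        have : x * a * x⁻¹ ∈ derivedSeries G (m+2) :=
          (derivedSeries_normal G (m+2)).conj_mem a ha x
        exact Subgroup.subset_closure (Or.inr this)
    | one => simpa using one_mem _
    | mul a b _ _ hia hib =>
      have : x * (a * b) * x⁻¹ = (x * a * x⁻¹) * (x * b * x⁻¹) := by group
      rw [this]; exact mul_mem hia hib
    | inv a _ hia =>
      have : x * a⁻¹ * x⁻¹ = (x * a * x⁻¹)⁻¹ := by group
      rw [this]; exact inv_mem hia
  have hXnorm : ∀ x ∈ L, x ∈ Subgroup.normalizer (Ksub G (entries L) m : Set G) := by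
    intro x hxL
    rw [Subgroup.mem_normalizer_iff]
    intro h
    constructor
    · intro hh; exact hconj x hxL h hh
    · intro hh
      have := hconj x⁻¹ (hinv x hxL) _ hh
      simpa [mul_assoc] using this
  have htop : Subgroup.normalizer (Ksub G (entries L) m : Set G) = ⊤ := by
    apply le_antisymm le_top
    rw [← fp_top Sig M hSig hFP]
    apply (Subgroup.closure_le _).2
    intro x hx
    exact hXnorm x hx
  exact Subgroup.normalizer_eq_top_iff.1 htop

lemma fp_T {L : List G} (hSig : closure Sig = ⊤)
    (hinv : ∀ x ∈ L, x⁻¹ ∈ L)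
    (hFP : ∀ z, Cand Sig L z → ¬ Raises M (entries L) z) :
    ∀ m, m < M →
      closure (Dset G (entries L) m) ⊔ derivedSeries G (m+2) = derivedSeries G m := by
  intro m
  induction m with
  | zero =>
    intro _
    have h0 : Dset G (entries L) 0 = entries L := by
      unfold Dset
      rw [derivedSeries_zero]
      simp
    rw [h0, fp_top Sig M hSig hFP, derivedSeries_zero]
    simp
  | succ m ih =>
    intro hm
    have hm' : m < M := by omega
    apply step_T (entries L) m (ih hm')
    · exact fp_normal Sig M hSig hinv hFP hm
    · intro y hy y' hy'
      have hcand : Cand Sig L ⁅y, y'⁆ := Or.inr ⟨y, hy.1, y', hy'.1, Or.inr rfl⟩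
      have hlevel : (⁅y, y'⁆ : G) ∈ derivedSeries G (m+1) := by
        rw [derivedSeries_succ]
        exact Subgroup.commutator_mem_commutator hy.2 hy'.2
      exact (fp_absorb Sig M hFP _ hcand).2 (m+1) hm hlevel

lemma fp_exact {L : List G} (hSig : closure Sig = ⊤) (hM : derivedSeries G M = ⊥)
    (hinv : ∀ x ∈ L, x⁻¹ ∈ L)
    (hFP : ∀ z, Cand Sig L z → ¬ Raises M (entries L) z) :
    ∀ m, closure (Dset G (entries L) m) = derivedSeries G m := by
  have hbot : ∀ m, M ≤ m → derivedSeries G m = ⊥ := fun m h => derivedSeries_bot_of_ge hM h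
  have hTall : ∀ m, closure (Dset G (entries L) m) ⊔ derivedSeries G (m+2)
      = derivedSeries G m := by
    intro m
    rcases Nat.lt_or_ge m M with h | h
    · exact fp_T Sig M hSig hinv hFP m h
    · rw [hbot m h, hbot (m+2) (by omega)]
      rw [sup_bot_eq, eq_bot_iff]
      apply (Subgroup.closure_le _).2
      intro a ha
      have : a ∈ derivedSeries G m := ha.2
      rw [hbot m h] at this
      simpa using this
  have haux : ∀ t m, M ≤ m + t → closure (Dset G (entries L) m) = derivedSeries G m := by
    intro t
    induction t with
    | zero =>
      intro m hm
      rw [hbot m (by omega), eq_bot_iff]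
      apply (Subgroup.closure_le _).2
      intro a ha
      have : a ∈ derivedSeries G m := ha.2
      rw [hbot m (by omega)] at this
      simpa using this
    | succ t ih =>
      intro m hm
      rcases Nat.lt_or_ge m M with h | h
      · have hnext : closure (Dset G (entries L) (m+1)) = derivedSeries G (m+1) :=
          ih (m+1) (by omega)
        apply le_antisymm
        · exact (Subgroup.closure_le _).2 Set.inter_subset_right
        · have hsub : derivedSeries G (m+2) ≤ closure (Dset G (entries L) m) := by
            calc derivedSeries G (m+2) ≤ derivedSeries G (m+1) := derivedSeries_antitone' _
              _ = closure (Dset G (entries L) (m+1)) := hnext.symm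
              _ ≤ closure (Dset G (entries L) m) := by
                  apply Subgroup.closure_mono
                  exact Set.inter_subset_inter_right _ (fun a ha =>
                    derivedSeries_antitone' m ha)
          calc derivedSeries G m
              = closure (Dset G (entries L) m) ⊔ derivedSeries G (m+2) := (hTall m).symm
            _ ≤ closure (Dset G (entries L) m) ⊔ closure (Dset G (entries L) m) :=
                sup_le_sup_left hsub _
            _ = closure (Dset G (entries L) m) := sup_idem _
      · rw [hbot m h, eq_bot_iff]
        apply (Subgroup.closure_le _).2
        intro a ha
        have : a ∈ derivedSeries G m := ha.2
        rw [hbot m h] at this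
        simpa using this
  intro m
  exact haux M m (by omega)

end FixedPoint

end SLaux

/-- every finite solvable group has a generating set adapted to its
derived series computable by a group straight-line sequence of length `O(log |G|)`. -/
theorem solvable_adapted_generating_set_log_cost :
    ∃ C : ℝ, 0 < C ∧
      ∀ (G : Type) [Group G] [Fintype G], IsSolvable G →
        ∀ Sig : Set G, Subgroup.closure Sig = ⊤ →
          ∃ (Δ : Set G) (L : List G),
            (∀ i : ℕ, Subgroup.closure (Δ ∩ (derivedSeries G i : Set G)) = derivedSeries G i) ∧
            IsGroupSLSeq Sig L ∧ (∀ d ∈ Δ, d ∈ L) ∧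
            (L.length : ℝ) ≤ C * (Real.logb 2 (Fintype.card G) + 1) := by
  refine ⟨100, by norm_num, ?_⟩
  intro G _ _ hsolv Sig hSig
  obtain ⟨M, hM⟩ := hsolv.solvable
  obtain ⟨L, hGood, hFP⟩ := SLaux.build Sig M (Nat.card G ^ 3 * SLaux.phimin G M) []
    (SLaux.good_nil Sig M) (Nat.le_add_left _ _)
  obtain ⟨hSL, hinv, hlen⟩ := hGood
  refine ⟨SLaux.entries L, L, ?_, hSL, fun d hd => hd, ?_⟩
  · intro i
    exact SLaux.fp_exact Sig M hSig hM hinv hFP i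
  · -- length bound
    have h2 : 2 ^ L.length ≤ Nat.card G ^ 18 := by
      have hphile : SLaux.phi G M (SLaux.entries L) ≤ Nat.card G ^ 3 * SLaux.phimin G M :=
        SLaux.phi_le M _
      have h3 : SLaux.phi G M (SLaux.entries L) ^ 6
          ≤ (Nat.card G ^ 3 * SLaux.phimin G M) ^ 6 := Nat.pow_le_pow_left hphile 6
      have h4 : (Nat.card G ^ 3 * SLaux.phimin G M) ^ 6
          = SLaux.phimin G M ^ 6 * Nat.card G ^ 18 := by ring
      have h5 : SLaux.phimin G M ^ 6 * 2 ^ L.length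
          ≤ SLaux.phimin G M ^ 6 * Nat.card G ^ 18 := by
        calc SLaux.phimin G M ^ 6 * 2 ^ L.length
            ≤ SLaux.phi G M (SLaux.entries L) ^ 6 := hlen
          _ ≤ (Nat.card G ^ 3 * SLaux.phimin G M) ^ 6 := h3
          _ = SLaux.phimin G M ^ 6 * Nat.card G ^ 18 := h4
      have hpos : 0 < SLaux.phimin G M ^ 6 :=
        Nat.pow_pos (SLaux.phimin_pos M)
      exact Nat.le_of_mul_le_mul_left h5 hpos
    have hcard : (1 : ℕ) ≤ Fintype.card G := Fintype.card_pos
    have hcardeq : Nat.card G = Fintype.card G := Nat.card_eq_fintype_card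
    have hreal : (2 : ℝ) ^ (L.length : ℕ) ≤ (Fintype.card G : ℝ) ^ (18 : ℕ) := by
      rw [hcardeq] at h2
      exact_mod_cast h2
    have hlogb : (L.length : ℝ) ≤ Real.logb 2 ((Fintype.card G : ℝ) ^ (18 : ℕ)) := by
      rw [Real.le_logb_iff_rpow_le (by norm_num) ?hpos]
      · rw [Real.rpow_natCast]
        exact hreal
      case hpos =>
        positivity
    have hfin : Real.logb 2 ((Fintype.card G : ℝ) ^ (18 : ℕ))
        = 18 * Real.logb 2 (Fintype.card G) := by
      rw [Real.logb_pow]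
      norm_num
    have hnn : 0 ≤ Real.logb 2 (Fintype.card G) :=
      Real.logb_nonneg (by norm_num) (by exact_mod_cast hcard)
    calc (L.length : ℝ) ≤ 18 * Real.logb 2 (Fintype.card G) := by rw [← hfin]; exact hlogb
      _ ≤ 100 * (Real.logb 2 (Fintype.card G) + 1) := by nlinarith
end
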